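/- arXiv:1505.01014 — 8 statements merged into one kernel-verified Lean document; each statement's English description precedes it below -/
import Mathlib

section
/- Duality for height-one multiple zeta values: for all integers r, k ≥ 1, ζ(1,...,1,k+1) with r−1 leading ones equals ζ(1,...,1,r+1) with k−1 leading ones. -/
open scoped BigOperators

/-- The multiple zeta value ζ(k₁,…,k_r) = ∑_{0<m₁<⋯<m_r} ∏ 1/m_i^{k_i}. -/
noncomputable def mzeta (ks : List ℕ) : ℝ :=
  ∑' f : {f : Fin ks.length → ℕ+ // StrictMono f},
    ∏ i : Fin ks.length, (1 : ℝ) / ((f.1 i : ℕ) : ℝ) ^ ks.get i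

/-- The multiple zeta-star value ζ*(k₁,…,k_r) = ∑_{0<m₁≤⋯≤m_r} ∏ 1/m_i^{k_i}. -/
noncomputable def mzetaStar (ks : List ℕ) : ℝ :=
  ∑' f : {f : Fin ks.length → ℕ+ // Monotone f},
    ∏ i : Fin ks.length, (1 : ℝ) / ((f.1 i : ℕ) : ℝ) ^ ks.get i

/-!
Write `T F p = ∑_{q > p} F q / q` (`tailSum`), so that ζ(1,…,1,k+1) with `r - 1` ones is
`heightOne r k = (Tʳ (m ↦ m⁻ᵏ)) 0`. The connector `c(m, n) = 1 / binom(m + n, m)` (`invChoose`)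
obeys
`c(m, n) / m = c(m, n + 1) / (n + 1) + c(m, n + 1) / m` and tends to `0`, so the sum defining
`T (c m)` telescopes to `T (c m) = c m / m`; with `c(m, 0) = 1` this gives `m⁻ᵏ = (Tᵏ (c m)) 0`.
Substituting this into `(Tʳ (m ↦ m⁻ᵏ)) 0` produces a double iterated sum of `c(m, n)`; all terms
are nonnegative, so the two iterations commute, and the symmetry `c(m, n) = c(n, m)` exchanges
the roles of `r` and `k`.
-/

open scoped ENNReal
open Filter Set Topology

theorem ENNReal.tsum_eq_of_eq_add_succ {a t : ℕ → ℝ≥0∞} (h : ∀ n, a n = t n + a (n + 1))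
    (ha : Tendsto a atTop (𝓝 0)) : ∑' n, t n = a 0 := by
  have partial_sum : ∀ N, ∑ i ∈ Finset.range N, t i + a N = a 0 := by
    intro N
    induction N with
    | zero => simp
    | succ N ih => rw [Finset.sum_range_succ, add_assoc, ← h, ih]
  have hlim := (ENNReal.tendsto_nat_tsum t).add ha
  simp only [partial_sum, add_zero] at hlim
  exact tendsto_nhds_unique tendsto_const_nhds hlim |>.symm

namespace MultipleZeta

section StrictChain

variable (α : Type*) [Preorder α]

abbrev StrictChain (n : ℕ) (p : α) : Type _ :=
  {f : Fin n → α // StrictMono f ∧ ∀ i, p < f i}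

variable {α}

instance (p : α) : Unique (StrictChain α 0 p) where
  default := ⟨Fin.elim0, fun i => i.elim0, fun i => i.elim0⟩
  uniq _ := Subtype.ext (Subsingleton.elim _ _)

def StrictChain.consEquiv (n : ℕ) (p : α) :
    (Σ q : Ioi p, StrictChain α n q) ≃ StrictChain α (n + 1) p where
  toFun x := ⟨Fin.cons x.1.1 x.2.1, Fin.strictMono_cons.2 ⟨x.2.2.2, x.2.2.1⟩,
    Fin.cases x.1.2 fun i => x.1.2.trans (x.2.2.2 i)⟩
  invFun f := ⟨⟨f.1 0, f.2.2 0⟩, Fin.tail f.1, f.2.1.comp Fin.strictMono_succ,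
    fun i => f.2.1 (Fin.succ_pos i)⟩
  left_inv _ := rfl
  right_inv f := Subtype.ext (Fin.cons_self_tail f.1)

@[simp]
theorem StrictChain.coe_consEquiv (n : ℕ) (p : α) (x : Σ q : Ioi p, StrictChain α n q) :
    (StrictChain.consEquiv n p x).1 = Fin.cons x.1.1 x.2.1 :=
  rfl

end StrictChain

noncomputable def tailSum (F : ℕ → ℝ≥0∞) (p : ℕ) : ℝ≥0∞ :=
  ∑' q : Ioi p, (q : ℝ≥0∞)⁻¹ * F q

theorem tailSum_eq_tsum_nat (F : ℕ → ℝ≥0∞) (p : ℕ) :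
    tailSum F p = ∑' i : ℕ, ((p + i + 1 : ℕ) : ℝ≥0∞)⁻¹ * F (p + i + 1) := by
  refine (Function.Injective.tsum_eq (g := fun i : ℕ => (⟨p + i + 1, by simp⟩ : Ioi p))
    (fun i j h => by simpa using h) fun q _ => ⟨q - (p + 1), Subtype.ext ?_⟩).symm
  have : p < (q : ℕ) := q.2
  dsimp only
  omega

theorem tailSum_congr {F G : ℕ → ℝ≥0∞} {p : ℕ} (h : EqOn F G (Ioi p)) :
    tailSum F p = tailSum G p :=
  tsum_congr fun q => by rw [h q.2]

theorem eqOn_iterate_tailSum {F G : ℕ → ℝ≥0∞} {p : ℕ} (h : EqOn F G (Ioi p)) (j : ℕ) :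
    EqOn (tailSum^[j] F) (tailSum^[j] G) (Ioi p) := by
  induction j with
  | zero => exact h
  | succ j ih =>
    intro q hq
    simp only [Function.iterate_succ_apply']
    exact tailSum_congr (ih.mono (Ioi_subset_Ioi (le_of_lt hq)))

theorem iterate_tailSum_congr {F G : ℕ → ℝ≥0∞} {p j : ℕ} (hj : j ≠ 0) (h : EqOn F G (Ioi p)) :
    tailSum^[j] F p = tailSum^[j] G p := by
  obtain ⟨j, rfl⟩ := Nat.exists_eq_succ_of_ne_zero hj
  simp only [Function.iterate_succ_apply']
  exact tailSum_congr (eqOn_iterate_tailSum h j)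

theorem tailSum_const_mul (a : ℝ≥0∞) (F : ℕ → ℝ≥0∞) :
    tailSum (fun q => a * F q) = fun p => a * tailSum F p := by
  funext p
  rw [tailSum, tailSum, ← ENNReal.tsum_mul_left]
  exact tsum_congr fun q => mul_left_comm _ _ _

theorem iterate_tailSum_const_mul (a : ℝ≥0∞) (F : ℕ → ℝ≥0∞) (j : ℕ) :
    tailSum^[j] (fun q => a * F q) = fun p => a * tailSum^[j] F p := by
  induction j with
  | zero => rfl
  | succ j ih => simp only [Function.iterate_succ_apply', ih, tailSum_const_mul]

theorem tailSum_tsum {ι : Type*} (F : ι → ℕ → ℝ≥0∞) :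
    tailSum (fun q => ∑' x, F x q) = fun p => ∑' x, tailSum (F x) p := by
  funext p
  simp only [tailSum, ← ENNReal.tsum_mul_left]
  exact ENNReal.tsum_comm

theorem iterate_tailSum_tsum {ι : Type*} (F : ι → ℕ → ℝ≥0∞) (j : ℕ) :
    tailSum^[j] (fun q => ∑' x, F x q) = fun p => ∑' x, tailSum^[j] (F x) p := by
  induction j with
  | zero => rfl
  | succ j ih =>
    simp only [Function.iterate_succ_apply']
    rw [ih, tailSum_tsum]

theorem iterate_tailSum_comm (G : ℕ → ℕ → ℝ≥0∞) (a b q : ℕ) (p : ℕ) :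
    tailSum^[a] (fun m => tailSum^[b] (G m) q) p =
      tailSum^[b] (fun n => tailSum^[a] (fun m => G m n) p) q := by
  induction a generalizing p with
  | zero => rfl
  | succ a ih =>
    simp only [Function.iterate_succ_apply']
    rw [funext ih]
    calc tailSum (fun p' => tailSum^[b] (fun n => tailSum^[a] (fun m => G m n) p') q) p
        = ∑' p' : Ioi p,
            tailSum^[b] (fun n => (p' : ℝ≥0∞)⁻¹ * tailSum^[a] (fun m => G m n) p') q :=
          tsum_congr fun p' => (congrFun (iterate_tailSum_const_mul _ _ b) q).symm
      _ = tailSum^[b] (fun n => tailSum (tailSum^[a] fun m => G m n) p) q :=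
          (congrFun (iterate_tailSum_tsum _ b) q).symm

theorem tsum_strictChain_eq_iterate_tailSum (F : ℕ → ℝ≥0∞) (n p : ℕ) :
    ∑' f : StrictChain ℕ (n + 1) p, (∏ i, (f.1 i : ℝ≥0∞)⁻¹) * F (f.1 (Fin.last n)) =
      tailSum^[n + 1] F p := by
  induction n generalizing p with
  | zero =>
    rw [← (StrictChain.consEquiv 0 p).tsum_eq, ENNReal.tsum_sigma']
    refine tsum_congr fun q => ?_
    rw [(hasSum_unique _).tsum_eq]
    simp
  | succ n ih =>
    rw [← (StrictChain.consEquiv _ p).tsum_eq, ENNReal.tsum_sigma', Function.iterate_succ_apply']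
    refine tsum_congr fun q => ?_
    rw [← ih, ← ENNReal.tsum_mul_left]
    refine tsum_congr fun g => ?_
    simp only [StrictChain.coe_consEquiv, Fin.prod_univ_succ, Fin.cons_zero, Fin.cons_succ,
      ← Fin.succ_last]
    ring

noncomputable def invChoose (m n : ℕ) : ℝ≥0∞ := ((m + n).choose m : ℝ≥0∞)⁻¹

theorem invChoose_comm (m n : ℕ) : invChoose m n = invChoose n m := by
  rw [invChoose, invChoose, Nat.choose_symm_add, add_comm]

theorem invChoose_zero_right (m : ℕ) : invChoose m 0 = 1 := by
  simp [invChoose]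

theorem invChoose_le {m : ℕ} (hm : m ≠ 0) (n : ℕ) : invChoose m n ≤ (n : ℝ≥0∞)⁻¹ := by
  have : n + 1 ≤ (m + n).choose m := by
    rw [Nat.choose_symm_add, ← Nat.choose_succ_self_right]
    exact Nat.choose_le_choose n (by omega)
  exact ENNReal.inv_le_inv.2 (by exact_mod_cast (Nat.le_succ n).trans this)

theorem tendsto_invChoose {m : ℕ} (hm : m ≠ 0) : Tendsto (invChoose m) atTop (𝓝 0) :=
  tendsto_of_tendsto_of_tendsto_of_le_of_le tendsto_const_nhds ENNReal.tendsto_inv_nat_nhds_zero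
    (fun _ => zero_le) (invChoose_le hm)

theorem inv_mul_invChoose {m : ℕ} (hm : m ≠ 0) (n : ℕ) :
    (m : ℝ≥0∞)⁻¹ * invChoose m n =
      ((n + 1 : ℕ) : ℝ≥0∞)⁻¹ * invChoose m (n + 1) + (m : ℝ≥0∞)⁻¹ * invChoose m (n + 1) := by
  have hA := Nat.choose_pos (Nat.le_add_right m n)
  have hB := Nat.choose_pos (Nat.le_add_right m (n + 1))
  have key : ((m + n).choose m * (m + n + 1) : ℝ) = (m + n + 1).choose m * (n + 1) := by
    have := Nat.choose_mul_succ_eq (m + n) m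
    rw [show m + n + 1 - m = n + 1 by omega] at this
    exact_mod_cast this
  unfold invChoose
  rw [← ENNReal.toReal_eq_toReal_iff' (by simp [ENNReal.mul_eq_top, hm, hA.ne'])
    (by simp [ENNReal.mul_eq_top, hm, hB.ne']),
    ENNReal.toReal_add (by simp [ENNReal.mul_eq_top, hB.ne'])
    (by simp [ENNReal.mul_eq_top, hm, hB.ne'])]
  simp only [ENNReal.toReal_mul, ENNReal.toReal_inv, ENNReal.toReal_natCast]
  field_simp
  push_cast
  linear_combination -key

theorem tailSum_invChoose {m : ℕ} (hm : m ≠ 0) (p : ℕ) :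
    tailSum (invChoose m) p = (m : ℝ≥0∞)⁻¹ * invChoose m p := by
  rw [tailSum_eq_tsum_nat]
  refine ENNReal.tsum_eq_of_eq_add_succ (a := fun i => (m : ℝ≥0∞)⁻¹ * invChoose m (p + i))
    (fun i => inv_mul_invChoose hm (p + i)) ?_
  simpa using ENNReal.Tendsto.const_mul ((tendsto_invChoose hm).comp
    (tendsto_atTop_mono (fun i => Nat.le_add_left i p) tendsto_id))
    (Or.inr (ENNReal.inv_ne_top.2 (by exact_mod_cast hm)))

theorem iterate_tailSum_invChoose {m : ℕ} (hm : m ≠ 0) (k : ℕ) :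
    tailSum^[k] (invChoose m) = fun p => (m : ℝ≥0∞)⁻¹ ^ k * invChoose m p := by
  induction k with
  | zero => simp
  | succ k ih =>
    rw [Function.iterate_succ_apply', ih, tailSum_const_mul]
    funext p
    rw [tailSum_invChoose hm, pow_succ, mul_assoc]

noncomputable def heightOne (r k : ℕ) : ℝ≥0∞ :=
  tailSum^[r] (fun m => (m : ℝ≥0∞)⁻¹ ^ k) 0

theorem heightOne_eq {r : ℕ} (hr : r ≠ 0) (k : ℕ) :
    heightOne r k = tailSum^[r] (fun m => tailSum^[k] (invChoose m) 0) 0 := by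
  refine iterate_tailSum_congr hr fun m hm => ?_
  simp only [iterate_tailSum_invChoose (Nat.pos_iff_ne_zero.1 hm), invChoose_zero_right, mul_one]

theorem heightOne_comm {r k : ℕ} (hr : r ≠ 0) (hk : k ≠ 0) : heightOne r k = heightOne k r := by
  rw [heightOne_eq hr, heightOne_eq hk, iterate_tailSum_comm]
  congr! 3 with n
  exact funext fun m => invChoose_comm m n

noncomputable def zetaSum {n : ℕ} (e : Fin n → ℕ) : ℝ≥0∞ :=
  ∑' f : {f : Fin n → ℕ+ // StrictMono f}, ∏ i, ((f.1 i : ℕ) : ℝ≥0∞)⁻¹ ^ e i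

/-- Valid also for divergent series: `mzeta` is then the junk value `0 = (∞ : ℝ≥0∞).toReal`. -/
theorem mzeta_eq_toReal_zetaSum (ks : List ℕ) : mzeta ks = (zetaSum ks.get).toReal := by
  rw [zetaSum, ENNReal.tsum_toReal_eq fun f => ENNReal.prod_ne_top fun i _ =>
    ENNReal.pow_ne_top (ENNReal.inv_ne_top.2 (by simp))]
  refine tsum_congr fun f => ?_
  simp [ENNReal.toReal_prod]

theorem zetaSum_comp_cast {m n : ℕ} (h : m = n) (e : Fin n → ℕ) :
    zetaSum (e ∘ Fin.cast h) = zetaSum e := by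
  subst h
  rfl

theorem mzeta_ofFn {n : ℕ} (e : Fin n → ℕ) : mzeta (List.ofFn e) = (zetaSum e).toReal := by
  have hget : (List.ofFn e).get = e ∘ Fin.cast List.length_ofFn := funext (List.get_ofFn e)
  rw [mzeta_eq_toReal_zetaSum, hget, zetaSum_comp_cast]

def strictMonoPNatEquiv (n : ℕ) : {f : Fin n → ℕ+ // StrictMono f} ≃ StrictChain ℕ n 0 where
  toFun f := ⟨fun i => f.1 i, fun _ _ h => f.2 h, fun i => (f.1 i).pos⟩
  invFun f := ⟨fun i => ⟨f.1 i, f.2.2 i⟩, fun _ _ h => f.2.1 h⟩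
  left_inv _ := rfl
  right_inv _ := rfl

theorem zetaSum_snoc (n k : ℕ) :
    zetaSum (Fin.snoc (fun _ : Fin n => 1) (k + 1) : Fin (n + 1) → ℕ) = heightOne (n + 1) k := by
  rw [zetaSum, heightOne, ← tsum_strictChain_eq_iterate_tailSum,
    ← (strictMonoPNatEquiv (n + 1)).symm.tsum_eq]
  refine tsum_congr fun f => ?_
  rw [Fin.prod_univ_castSucc, Fin.prod_univ_castSucc]
  simp only [Fin.snoc_castSucc, Fin.snoc_last, pow_one]
  rw [pow_succ', ← mul_assoc]
  rfl

theorem ofFn_snoc_const (n k : ℕ) :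
    List.ofFn (Fin.snoc (fun _ : Fin n => 1) k : Fin (n + 1) → ℕ) = List.replicate n 1 ++ [k] := by
  rw [List.ofFn_succ']
  simp only [Fin.snoc_castSucc, Fin.snoc_last, List.ofFn_const, List.concat_eq_append]

theorem mzeta_replicate_one_append {r : ℕ} (hr : r ≠ 0) (k : ℕ) :
    mzeta (List.replicate (r - 1) 1 ++ [k + 1]) = (heightOne r k).toReal := by
  obtain ⟨n, rfl⟩ := Nat.exists_eq_succ_of_ne_zero hr
  rw [Nat.succ_sub_one, ← ofFn_snoc_const, mzeta_ofFn, zetaSum_snoc]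

end MultipleZeta

/-- Duality for height-one MZVs: ζ(1,…,1,k+1) (r−1 ones) = ζ(1,…,1,r+1) (k−1 ones). -/
theorem height_one_duality (r k : ℕ) (hr : 1 ≤ r) (hk : 1 ≤ k) :
    mzeta (List.replicate (r - 1) 1 ++ [k + 1]) =
      mzeta (List.replicate (k - 1) 1 ++ [r + 1]) := by
  rw [MultipleZeta.mzeta_replicate_one_append (by omega),
    MultipleZeta.mzeta_replicate_one_append (by omega),
    MultipleZeta.heightOne_comm (by omega) (by omega)]
end

section
/- The sum formula for depth 2: for any integer k ≥ 1, Σ_{a+b = k+2, a ≥ 1, b ≥ 2} ζ(a, b) = ζ(k+2). -/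
open scoped BigOperators

/-! Writing `n = m + d`, the geometric sum gives
`∑_{a=1}^{k} 1/(m^a n^(k+2-a)) = 1/(m^k d n) - 1/(d n^(k+1))`, so the left-hand side is the
Tornheim sum `T(k,1,1) = ∑ 1/(m^k d (m+d))` minus `ζ(1,k+1)`. Summing over `d` first,
`∑_d m/(d(m+d)) = H_m` telescopes, so `T(k,1,1) = ∑_m H_m/m^(k+1)`; splitting
`H_m = H_(m-1) + 1/m` turns this into `ζ(1,k+1) + ζ(k+2)`. -/

open Finset Filter Topology

theorem sum_range_sub_shift_symm {M : Type*} [AddCommGroup M] (u : ℕ → M) (m N : ℕ) :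
    ∑ j ∈ range N, (u j - u (j + m)) = ∑ j ∈ range m, (u j - u (j + N)) := by
  have h := (sum_range_add u N m).symm.trans (add_comm N m ▸ sum_range_add u m N)
  simp only [sum_sub_distrib, add_comm _ m, add_comm _ N]
  linear_combination (norm := abel_nf) h

theorem hasSum_sub_shift_of_antitone {u : ℕ → ℝ} (hu : Antitone u)
    (hlim : Tendsto u atTop (𝓝 0)) (m : ℕ) :
    HasSum (fun j => u j - u (j + m)) (∑ j ∈ range m, u j) := by
  refine (hasSum_iff_tendsto_nat_of_nonneg (fun j => sub_nonneg.2 (hu (by omega))) _).2 ?_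
  simp only [sum_range_sub_shift_symm u m]
  have htail : Tendsto (fun N => ∑ j ∈ range m, (u j - u (j + N))) atTop
      (𝓝 (∑ j ∈ range m, (u j - 0))) :=
    tendsto_finsetSum _ fun j _ => tendsto_const_nhds.sub
      (hlim.comp ((tendsto_add_atTop_nat j).congr fun N => add_comm N j))
  simpa using htail

theorem antitone_one_div_add {x : ℝ} (hx : 0 < x) : Antitone fun j : ℕ => 1 / ((j : ℝ) + x) :=
  fun _ _ hij => one_div_le_one_div_of_le (by positivity) (by gcongr)

theorem tendsto_one_div_add_atTop_nhds_zero {x : ℝ} :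
    Tendsto (fun j : ℕ => 1 / ((j : ℝ) + x)) atTop (𝓝 0) := by
  simpa only [one_div, Function.comp_def] using
    tendsto_inv_atTop_zero.comp (tendsto_atTop_add_const_right _ x tendsto_natCast_atTop_atTop)

theorem hasSum_harmonic (m : ℕ) :
    HasSum (fun j : ℕ => (m : ℝ) / (((j : ℝ) + 1) * ((j : ℝ) + m + 1))) (harmonic m) := by
  convert hasSum_sub_shift_of_antitone (antitone_one_div_add one_pos)
    tendsto_one_div_add_atTop_nhds_zero m using 1
  · ext j
    push_cast
    field_simp
    ring
  · simp [harmonic]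

theorem one_div_add_one_sq_le_sub {y : ℝ} (hy : 0 < y) :
    1 / (y + 1) ^ 2 ≤ 1 / y - 1 / (y + 1) := by
  rw [show 1 / y - 1 / (y + 1) = 1 / (y * (y + 1)) by field_simp; ring]
  exact one_div_le_one_div_of_le (by positivity) (by nlinarith)

theorem hasSum_one_div_add_sub {x : ℝ} (hx : 0 < x) :
    HasSum (fun j : ℕ => 1 / ((j : ℝ) + x) - 1 / ((j : ℝ) + x + 1)) (1 / x) := by
  simpa [add_right_comm _ (1 : ℝ) x] using
    hasSum_sub_shift_of_antitone (antitone_one_div_add hx) tendsto_one_div_add_atTop_nhds_zero 1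

theorem summable_one_div_add_sq {x : ℝ} (hx : 0 < x) :
    Summable fun j : ℕ => 1 / ((j : ℝ) + x + 1) ^ 2 :=
  (hasSum_one_div_add_sub hx).summable.of_nonneg_of_le (fun _ => by positivity)
    fun _ => one_div_add_one_sq_le_sub (by positivity)

theorem tsum_one_div_add_sq_le {x : ℝ} (hx : 0 < x) :
    ∑' j : ℕ, 1 / ((j : ℝ) + x + 1) ^ 2 ≤ 1 / x :=
  hasSum_le (fun _ => one_div_add_one_sq_le_sub (by positivity))
    (summable_one_div_add_sq hx).hasSum (hasSum_one_div_add_sub hx)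

def strictMonoFinOneEquiv : ℕ ≃ {f : Fin 1 → ℕ+ // StrictMono f} where
  toFun n := ⟨fun _ => n.succPNat, Subsingleton.strictMono _⟩
  invFun f := (f.1 0 : ℕ) - 1
  left_inv n := by simp
  right_inv f := by
    ext i : 2
    fin_cases i
    exact PNat.eq (Nat.succ_pred_eq_of_pos (f.1 0).pos)

def strictMonoFinTwoEquiv : ℕ × ℕ ≃ {f : Fin 2 → ℕ+ // StrictMono f} where
  toFun p := ⟨![p.1.succPNat, (p.1 + p.2 + 1).succPNat], by
    simp [Fin.strictMono_iff_lt_succ, ← PNat.coe_lt_coe]⟩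
  invFun f := ((f.1 0 : ℕ) - 1, (f.1 1 : ℕ) - f.1 0 - 1)
  left_inv p := by ext <;> simp; omega
  right_inv f := by
    have h0 := (f.1 0).pos
    have h01 : (f.1 0 : ℕ) < f.1 1 := f.2 (by decide : (0 : Fin 2) < 1)
    ext i : 2
    apply PNat.eq
    fin_cases i <;> simp <;> omega

/-- The `(m, n) = (i + 1, j + 1)` term of Tornheim's series `T(a,b,c) = ∑ 1/(m^a n^b (m+n)^c)`;
`ζ(a, c) = T(a, 0, c)` after the substitution `m₂ = m₁ + n`. -/
noncomputable def tornheimTerm (a b c : ℕ) (p : ℕ × ℕ) : ℝ :=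
  1 / (((p.1 : ℝ) + 1) ^ a * ((p.2 : ℝ) + 1) ^ b * ((p.1 : ℝ) + p.2 + 2) ^ c)

theorem mzeta_singleton (c : ℕ) : mzeta [c] = ∑' n : ℕ, 1 / ((n : ℝ) + 1) ^ c := by
  refine (strictMonoFinOneEquiv.tsum_eq _).symm.trans ?_
  simp [strictMonoFinOneEquiv]

theorem mzeta_pair (a b : ℕ) : mzeta [a, b] = ∑' p, tornheimTerm a 0 b p := by
  refine (strictMonoFinTwoEquiv.tsum_eq _).symm.trans (tsum_congr fun p => ?_)
  simp [strictMonoFinTwoEquiv, tornheimTerm, Fin.prod_univ_two, add_assoc, one_add_one_eq_two]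

theorem tornheimTerm_nonneg (a b c : ℕ) (p : ℕ × ℕ) : 0 ≤ tornheimTerm a b c p := by
  unfold tornheimTerm; positivity

theorem tornheimTerm_swap (a b c : ℕ) (p : ℕ × ℕ) :
    tornheimTerm a b c p.swap = tornheimTerm b a c p := by
  simp only [tornheimTerm, Prod.fst_swap, Prod.snd_swap]
  ring_nf

theorem tornheimTerm_le_one_zero_two {a c : ℕ} (ha : 1 ≤ a) (hc : 2 ≤ c) (p : ℕ × ℕ) :
    tornheimTerm a 0 c p ≤ tornheimTerm 1 0 2 p := by
  unfold tornheimTerm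
  have hx : (1 : ℝ) ≤ p.1 + 1 := by linarith [(p.1.cast_nonneg : (0 : ℝ) ≤ p.1)]
  have hy : (1 : ℝ) ≤ p.1 + p.2 + 2 := by linarith [(p.2.cast_nonneg : (0 : ℝ) ≤ p.2)]
  gcongr

theorem tornheimTerm_one_zero_two_eq (p : ℕ × ℕ) :
    tornheimTerm 1 0 2 p =
      1 / ((p.1 : ℝ) + 1) * (1 / ((p.2 : ℝ) + ((p.1 : ℝ) + 1) + 1) ^ 2) := by
  rw [tornheimTerm, one_div_mul_one_div, pow_one, pow_zero, mul_one]
  ring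

theorem summable_tornheimTerm_one_zero_two : Summable (tornheimTerm 1 0 2) := by
  refine (summable_prod_of_nonneg (tornheimTerm_nonneg 1 0 2)).2 ⟨fun i => ?_, ?_⟩
  · simp only [tornheimTerm_one_zero_two_eq]
    exact (summable_one_div_add_sq (by positivity)).mul_left _
  · refine (summable_nat_add_iff 1).2 (Real.summable_one_div_nat_pow.2 one_lt_two)
      |>.of_nonneg_of_le (fun i => tsum_nonneg fun j => tornheimTerm_nonneg 1 0 2 _) fun i => ?_
    simp only [tornheimTerm_one_zero_two_eq, tsum_mul_left]
    push_cast
    rw [sq, ← one_div_mul_one_div]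
    gcongr
    exact tsum_one_div_add_sq_le (by positivity)

theorem hasSum_mzeta_pair {a b : ℕ} (ha : 1 ≤ a) (hb : 2 ≤ b) :
    HasSum (tornheimTerm a 0 b) (mzeta [a, b]) := by
  rw [mzeta_pair]
  exact (summable_tornheimTerm_one_zero_two.of_nonneg_of_le (tornheimTerm_nonneg a 0 b)
    (tornheimTerm_le_one_zero_two ha hb)).hasSum

theorem sum_range_one_div_pow_mul_pow_add (k : ℕ) {x d : ℝ} (hx : 0 < x) (hd : 0 < d) :
    ∑ a ∈ range k, 1 / (x ^ (a + 1) * (x + d) ^ (k + 1 - a)) + 1 / (d * (x + d) ^ (k + 1)) =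
      1 / (x ^ k * d * (x + d)) := by
  have hy : 0 < x + d := by positivity
  induction k with
  | zero => simp [mul_comm]
  | succ k ih =>
    have hshift : ∑ a ∈ range k, 1 / (x ^ (a + 1) * (x + d) ^ (k + 1 + 1 - a)) =
        (∑ a ∈ range k, 1 / (x ^ (a + 1) * (x + d) ^ (k + 1 - a))) / (x + d) := by
      rw [sum_div]
      refine sum_congr rfl fun a ha => ?_
      rw [show k + 1 + 1 - a = k + 1 - a + 1 by have := mem_range.1 ha; omega, pow_succ]
      field_simp
      ring
    rw [sum_range_succ, hshift, eq_sub_of_add_eq ih, show k + 1 + 1 - k = 2 by omega]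
    field_simp
    ring

theorem sum_filter_antidiagonal_eq_sum_range {M : Type*} [AddCommMonoid M] (k : ℕ)
    (f : ℕ → ℕ → M) :
    ∑ p ∈ (antidiagonal (k + 2)).filter (fun p => 1 ≤ p.1 ∧ 2 ≤ p.2), f p.1 p.2 =
      ∑ a ∈ range k, f (a + 1) (k + 1 - a) := by
  refine sum_nbij' (fun p => p.1 - 1) (fun a => (a + 1, k + 1 - a)) ?_ ?_ ?_ ?_ ?_ <;>
    simp only [mem_filter, HasAntidiagonal.mem_antidiagonal, mem_range, Prod.forall,
      Prod.mk.injEq] <;> intros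
  any_goals omega
  congr <;> omega

theorem HasSum.sum_antidiagonal {M : Type*} [AddCommMonoid M] [TopologicalSpace M] [ContinuousAdd M]
    [RegularSpace M] {f : ℕ × ℕ → M} {a : M} (hf : HasSum f a) :
    HasSum (fun n => ∑ p ∈ antidiagonal n, f p) a :=
  ((HasAntidiagonal.sigmaAntidiagonalEquivProd.hasSum_iff).2 hf).sigma fun n => by
    rw [← sum_coe_sort]
    exact hasSum_fintype _

theorem sum_antidiagonal_tornheimTerm_one_zero (c s : ℕ) :
    ∑ p ∈ antidiagonal s, tornheimTerm 1 0 c p =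
      (harmonic (s + 1) : ℝ) / ((s : ℝ) + 2) ^ c := by
  have hs : ∀ p ∈ antidiagonal s,
      tornheimTerm 1 0 c p = 1 / ((p.1 : ℝ) + 1) / ((s : ℝ) + 2) ^ c := by
    intro p hp
    have : (p.1 : ℝ) + p.2 = s := by exact_mod_cast HasAntidiagonal.mem_antidiagonal.1 hp
    rw [tornheimTerm, this, pow_one, pow_zero, mul_one, div_div]
  rw [sum_congr rfl hs, Nat.sum_antidiagonal_eq_sum_range_succ (fun i _ => 1 / ((i : ℝ) + 1) / _),
    ← sum_div]
  simp [harmonic]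

theorem hasSum_harmonic_div_pow {c : ℕ} (hc : 2 ≤ c) :
    HasSum (fun n : ℕ => (harmonic (n + 1) : ℝ) / ((n : ℝ) + 1) ^ c)
      (mzeta [c + 1] + mzeta [1, c]) := by
  have hpair :
      HasSum (fun s : ℕ => (harmonic (s + 1) : ℝ) / ((s : ℝ) + 2) ^ c) (mzeta [1, c]) := by
    simpa only [sum_antidiagonal_tornheimTerm_one_zero] using
      (hasSum_mzeta_pair le_rfl hc).sum_antidiagonal
  have hsingle : HasSum (fun n : ℕ => 1 / ((n : ℝ) + 1) ^ (c + 1)) (mzeta [c + 1]) := by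
    rw [mzeta_singleton]
    refine Summable.hasSum ?_
    exact_mod_cast (summable_nat_add_iff 1).2 (Real.summable_one_div_nat_pow.2 (by omega))
  refine (hasSum_nat_add_iff' 1).1 ?_
  convert ((hasSum_nat_add_iff' 1).2 hsingle).add hpair using 1
  · ext s
    push_cast [harmonic_succ]
    field_simp
    ring
  · simp only [range_one, sum_singleton]
    norm_num
    ring

theorem hasSum_tornheimTerm_one_one {k : ℕ} (hk : 1 ≤ k) :
    HasSum (tornheimTerm k 1 1) (mzeta [k + 2] + mzeta [1, k + 1]) := by
  have hrow : ∀ i : ℕ, HasSum (fun j => tornheimTerm k 1 1 (i, j))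
      ((harmonic (i + 1) : ℝ) / ((i : ℝ) + 1) ^ (k + 1)) := by
    intro i
    refine ((hasSum_harmonic (i + 1)).div_const (((i : ℝ) + 1) ^ (k + 1))).congr_fun fun j => ?_
    simp only [tornheimTerm]
    push_cast
    field_simp
    ring
  have hH := hasSum_harmonic_div_pow (c := k + 1) (by omega)
  have hsum : Summable (tornheimTerm k 1 1) :=
    (summable_prod_of_nonneg (tornheimTerm_nonneg k 1 1)).2
      ⟨fun i => (hrow i).summable, by simpa only [(hrow _).tsum_eq] using hH.summable⟩
  convert hsum.hasSum using 1
  rw [hsum.tsum_prod, tsum_congr fun i => (hrow i).tsum_eq, hH.tsum_eq]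

theorem sum_range_tornheimTerm_add_tornheimTerm (k : ℕ) (p : ℕ × ℕ) :
    ∑ a ∈ range k, tornheimTerm (a + 1) 0 (k + 1 - a) p + tornheimTerm 0 1 (k + 1) p =
      tornheimTerm k 1 1 p := by
  have key := sum_range_one_div_pow_mul_pow_add k (x := (p.1 : ℝ) + 1) (d := (p.2 : ℝ) + 1)
    (by positivity) (by positivity)
  rw [show (p.1 : ℝ) + 1 + (p.2 + 1) = p.1 + p.2 + 2 by ring] at key
  simpa only [tornheimTerm, pow_zero, mul_one, one_mul, pow_one] using key

/-- Sum formula in depth 2: ∑_{a+b=k+2, a≥1, b≥2} ζ(a,b) = ζ(k+2). -/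
theorem sum_formula_depth_two (k : ℕ) (hk : 1 ≤ k) :
    (∑ p ∈ (Finset.HasAntidiagonal.antidiagonal (k + 2)).filter (fun p => 1 ≤ p.1 ∧ 2 ≤ p.2),
        mzeta [p.1, p.2]) = mzeta [k + 2] := by
  rw [sum_filter_antidiagonal_eq_sum_range k fun a b => mzeta [a, b]]
  have hsum : HasSum (fun p => ∑ a ∈ range k, tornheimTerm (a + 1) 0 (k + 1 - a) p)
      (∑ a ∈ range k, mzeta [a + 1, k + 1 - a]) :=
    hasSum_sum fun a ha => hasSum_mzeta_pair (by omega) (by have := mem_range.1 ha; omega)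
  have hcorr : HasSum (tornheimTerm 0 1 (k + 1)) (mzeta [1, k + 1]) := by
    simpa only [Function.comp_def, Equiv.prodComm_apply, tornheimTerm_swap] using
      (Equiv.prodComm ℕ ℕ).hasSum_iff.2 (hasSum_mzeta_pair (b := k + 1) le_rfl (by omega))
  have htotal := (hsum.add hcorr).unique <| by
    simpa only [sum_range_tornheimTerm_add_tornheimTerm] using hasSum_tornheimTerm_one_one hk
  linarith
end

section
/- For |x| < 1, exp( Σ_{n ≥ 1} ζ(2n) x^{2n} / n ) = 1 + Σ_{n ≥ 1} ζ*(2,...,2) x^{2n} (with n twos). -/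
open scoped BigOperators

/-!
Expanding `-log (1 - t) = ∑ tⁿ⁺¹ / (n + 1)` at `t = x² / m²` and summing over `m` (all terms are
nonnegative, so the double sum may be swapped) turns the exponent into `∑ₘ -log (1 - x² / m²)`.
Hence the left side is the product `∏ₘ (1 - x² / m²)⁻¹ = ∏ₘ ∑ₖ (x² / m²)ᵏ`. Multiplying out, every
finite multiset of positive integers, i.e. every monotone tuple `m₁ ≤ ⋯ ≤ mₙ`, contributes
`∏ x² / mᵢ²` exactly once; grouping by `n` gives `ζ*(2, …, 2) x²ⁿ`.
-/

open Filter Topology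
open scoped ENNReal

section EulerProduct

variable {α : Type*}

def monotoneFinEquivMultiset [LinearOrder α] (n : ℕ) :
    {f : Fin n → α // Monotone f} ≃ {m : Multiset α // Multiset.card m = n} where
  toFun f := ⟨List.ofFn f.1, by simp⟩
  invFun m := ⟨fun i => (m.1.sort).get (i.cast (by simp [m.2])),
    fun _ _ hij => (m.1.pairwise_sort _).sortedLE.monotone_get hij⟩
  left_inv f := by
    obtain ⟨f, hf⟩ := f
    ext i
    simp [List.mergeSort_eq_self _ hf.sortedLE_ofFn.pairwise]
    rfl
  right_inv m := by
    obtain ⟨m, rfl⟩ := m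
    ext : 1
    refine .trans ?_ (m.sort_eq (· ≤ ·))
    dsimp only
    congr 1
    apply List.ext_get <;> simp

def Multiset.supportedInsertEquiv [DecidableEq α] {a : α} {s : Finset α} (ha : a ∉ s) :
    ℕ × {m : Multiset α // ∀ b ∈ m, b ∈ s} ≃ {m : Multiset α // ∀ b ∈ m, b ∈ insert a s} where
  toFun p := ⟨Multiset.replicate p.1 a + p.2.1, fun b hb => by
    rcases Multiset.mem_add.mp hb with hb | hb
    · simp [Multiset.eq_of_mem_replicate hb]
    · exact Finset.mem_insert_of_mem (p.2.2 b hb)⟩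
  invFun m := (m.1.count a, ⟨m.1.filter (· ≠ a), fun b hb => by
    obtain ⟨hbm, hba⟩ := Multiset.mem_filter.mp hb
    exact (Finset.mem_insert.mp (m.2 b hbm)).resolve_left hba⟩)
  left_inv p := by
    obtain ⟨k, m, hm⟩ := p
    have ham : a ∉ m := fun h => ha (hm a h)
    refine Prod.ext ?_ (Subtype.ext ?_)
    · simp [Multiset.count_eq_zero.mpr ham]
    · simp [Multiset.filter_add, Multiset.mem_replicate,
        Multiset.filter_eq_self.mpr fun b hb => ne_of_mem_of_not_mem hb ham]
  right_inv m := by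
    ext : 1
    simp only
    rw [← Multiset.filter_eq']
    exact Multiset.filter_add_not _ _

theorem ENNReal.prod_tsum_pow_eq_tsum_multiset [DecidableEq α] (w : α → ℝ≥0∞) (s : Finset α) :
    ∏ a ∈ s, ∑' k : ℕ, w a ^ k = ∑' m : {m : Multiset α // ∀ a ∈ m, a ∈ s}, (m.1.map w).prod := by
  induction s using Finset.induction_on with
  | empty =>
    rw [Finset.prod_empty, tsum_eq_single ⟨0, by simp⟩ fun m hm =>
      absurd (Subtype.ext (Multiset.eq_zero_of_forall_notMem (by simpa using m.2))) hm]
    simp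
  | insert a s ha ih =>
    rw [Finset.prod_insert ha, ih, ← ENNReal.tsum_mul_right]
    simp_rw [← ENNReal.tsum_mul_left]
    rw [← ENNReal.tsum_prod, ← (Multiset.supportedInsertEquiv ha).tsum_eq]
    simp [Multiset.supportedInsertEquiv]

theorem ENNReal.tendsto_tsum_subtype_atTop {ι β : Type*} [Preorder ι] [IsDirectedOrder ι]
    [Nonempty ι] (g : β → ℝ≥0∞) {S : ι → Set β} (hS : Monotone S) (hcover : ∀ b, ∃ i, b ∈ S i) :
    Tendsto (fun i => ∑' b : S i, g b) atTop (𝓝 (∑' b, g b)) := by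
  convert tendsto_atTop_iSup fun i j hij => ENNReal.tsum_mono_subtype g (hS hij)
  refine le_antisymm ?_ (iSup_le fun i => ?_)
  · rw [ENNReal.tsum_eq_iSup_sum]
    refine iSup_le fun t => ?_
    classical
    choose i hi using hcover
    obtain ⟨j, hj⟩ := (t.image i).exists_le
    calc ∑ b ∈ t, g b = ∑' b : (t : Set β), g b := (Finset.tsum_subtype t g).symm
      _ ≤ ∑' b : S j, g b := ENNReal.tsum_mono_subtype g fun b hb =>
          hS (hj _ (Finset.mem_image_of_mem i hb)) (hi b)
      _ ≤ ⨆ i, ∑' b : S i, g b := le_iSup (fun i => ∑' b : S i, g b) j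
  · simpa using ENNReal.tsum_mono_subtype g (Set.subset_univ (S i))

theorem ENNReal.hasProd_tsum_pow_multiset (w : α → ℝ≥0∞) :
    HasProd (fun a => ∑' k : ℕ, w a ^ k) (∑' m : Multiset α, (m.map w).prod) := by
  classical
  unfold HasProd
  simp_rw [ENNReal.prod_tsum_pow_eq_tsum_multiset]
  exact ENNReal.tendsto_tsum_subtype_atTop _ (S := fun s : Finset α => {m | ∀ a ∈ m, a ∈ s})
    (fun s t hst m hm a ha => hst (hm a ha)) fun m => ⟨m.toFinset, by simp⟩

theorem ENNReal.tsum_multiset_eq_tsum_monotone [LinearOrder α] (w : α → ℝ≥0∞) :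
    ∑' m : Multiset α, (m.map w).prod =
      ∑' n, ∑' f : {f : Fin n → α // Monotone f}, ∏ i, w (f.1 i) := by
  rw [← (Equiv.sigmaFiberEquiv Multiset.card).tsum_eq, ENNReal.tsum_sigma']
  refine tsum_congr fun n => ?_
  rw [← (monotoneFinEquivMultiset n).tsum_eq]
  simp [monotoneFinEquivMultiset, List.prod_ofFn]

theorem tsum_monotone_fin_zero_prod [Preorder α] (r : α → ℝ) :
    ∑' f : {f : Fin 0 → α // Monotone f}, ∏ i, r (f.1 i) = 1 := by
  rw [tsum_eq_single ⟨isEmptyElim, fun i => isEmptyElim i⟩ fun f hf =>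
    absurd (Subsingleton.elim _ _) hf]
  simp

/-- The expansion is carried out in `ℝ≥0∞`, where it needs no summability; the finiteness of the
real product then makes every sum finite. -/
theorem hasSum_tsum_monotone_prod_of_hasProd [LinearOrder α] {r : α → ℝ} (hr0 : ∀ a, 0 ≤ r a)
    (hr1 : ∀ a, r a < 1) {P : ℝ} (hP : HasProd (fun a => (1 - r a)⁻¹) P) :
    HasSum (fun n => ∑' f : {f : Fin n → α // Monotone f}, ∏ i, r (f.1 i)) P := by
  set w : α → ℝ≥0∞ := fun a => ENNReal.ofReal (r a)
  have hgeom : ∀ a, ∑' k : ℕ, w a ^ k = ENNReal.ofReal (1 - r a)⁻¹ := fun a => by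
    simp_rw [w, ← ENNReal.ofReal_pow (hr0 a)]
    rw [← ENNReal.ofReal_tsum_of_nonneg (fun k => pow_nonneg (hr0 a) k)
      (summable_geometric_of_lt_one (hr0 a) (hr1 a)), tsum_geometric_of_lt_one (hr0 a) (hr1 a)]
  have hinv : ∀ a, 0 ≤ (1 - r a)⁻¹ := fun a => (inv_pos.mpr (by linarith [hr1 a])).le
  have hP' : HasProd (fun a => ∑' k : ℕ, w a ^ k) (ENNReal.ofReal P) := by
    refine ((ENNReal.continuous_ofReal.tendsto P).comp hP).congr fun s => ?_
    simp only [Function.comp_apply, hgeom]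
    exact ENNReal.ofReal_prod_of_nonneg fun a _ => hinv a
  have hsum := (ENNReal.hasProd_tsum_pow_multiset w).unique hP'
  rw [ENNReal.tsum_multiset_eq_tsum_monotone] at hsum
  have hterm : ∀ n, (∑' f : {f : Fin n → α // Monotone f}, ∏ i, w (f.1 i)).toReal =
      ∑' f : {f : Fin n → α // Monotone f}, ∏ i, r (f.1 i) := fun n => by
    simp_rw [w, ← ENNReal.ofReal_prod_of_nonneg fun i _ => hr0 _]
    rw [ENNReal.tsum_toReal_eq fun _ => ENNReal.ofReal_ne_top]
    exact tsum_congr fun f => ENNReal.toReal_ofReal (Finset.prod_nonneg fun i _ => hr0 _)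
  have hfin : ∑' n, ∑' f : {f : Fin n → α // Monotone f}, ∏ i, w (f.1 i) ≠ ∞ :=
    hsum ▸ ENNReal.ofReal_ne_top
  convert ENNReal.hasSum_toReal hfin using 1
  · exact funext fun n => (hterm n).symm
  · rw [← ENNReal.tsum_toReal_eq fun n => ne_top_of_le_ne_top hfin (ENNReal.le_tsum n), hsum,
      ENNReal.toReal_ofReal (hP.nonneg hinv)]

end EulerProduct

theorem hasSum_neg_log_one_sub {ι : Type*} {r : ι → ℝ} {q : ℝ} (hr0 : ∀ i, 0 ≤ r i)
    (hrq : ∀ i, r i ≤ q) (hq : q < 1) (hr : Summable r) :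
    HasSum (fun i => -Real.log (1 - r i)) (∑' n : ℕ, (∑' i, r i ^ (n + 1)) / (n + 1)) := by
  set F : ι → ℕ → ℝ := fun i n => r i ^ (n + 1) / (n + 1)
  have hF0 : ∀ i n, 0 ≤ F i n := fun i n => div_nonneg (pow_nonneg (hr0 i) _) n.cast_add_one_pos.le
  have hlog : ∀ i, HasSum (F i) (-Real.log (1 - r i)) := fun i =>
    Real.hasSum_pow_div_log_of_abs_lt_one (by rw [abs_of_nonneg (hr0 i)]; linarith [hrq i])
  have hlog_le : ∀ i, -Real.log (1 - r i) ≤ (1 - q)⁻¹ * r i := fun i => by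
    have h1 : 0 < 1 - r i := by linarith [hrq i]
    have := hr0 i
    rw [← Real.log_inv]
    calc Real.log (1 - r i)⁻¹ ≤ (1 - r i)⁻¹ - 1 := Real.log_le_sub_one_of_pos (inv_pos.mpr h1)
      _ = (1 - r i)⁻¹ * r i := by field_simp; ring
      _ ≤ (1 - q)⁻¹ * r i := by gcongr; linarith [hrq i]
  have hF : Summable (Function.uncurry F) :=
    (summable_prod_of_nonneg fun p => hF0 p.1 p.2).mpr ⟨fun i => (hlog i).summable,
      (hr.mul_left _).of_nonneg_of_le (fun i => (hlog i).tsum_eq ▸ (hlog i).nonneg (hF0 i))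
        fun i => (hlog i).tsum_eq ▸ hlog_le i⟩
  have hswap : ∑' n : ℕ, (∑' i, r i ^ (n + 1)) / (n + 1) = ∑' p, Function.uncurry F p := by
    rw [hF.tsum_prod_uncurry fun i => (hlog i).summable, ← hF.tsum_comm]
    exact tsum_congr fun n => tsum_div_const.symm
  rw [hswap]
  exact hF.hasSum.prod_fiberwise hlog

theorem mzetaStar_replicate (n k : ℕ) :
    mzetaStar (List.replicate n k) =
      ∑' f : {f : Fin n → ℕ+ // Monotone f}, ∏ i, (1 : ℝ) / ((f.1 i : ℕ) : ℝ) ^ k := by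
  -- generalising the list lets `rfl` identify `Fin l.length` with `Fin n`
  suffices ∀ l : List ℕ, l.length = n → (∀ i, l.get i = k) → mzetaStar l =
      ∑' f : {f : Fin n → ℕ+ // Monotone f}, ∏ i, (1 : ℝ) / ((f.1 i : ℕ) : ℝ) ^ k from
    this _ List.length_replicate fun i => List.eq_of_mem_replicate (List.get_mem _ i)
  rintro l rfl hl
  simp only [mzetaStar, hl]

theorem mzetaStar_replicate_two_mul_pow (x : ℝ) (n : ℕ) :
    mzetaStar (List.replicate n 2) * x ^ (2 * n) =
      ∑' f : {f : Fin n → ℕ+ // Monotone f}, ∏ i, x ^ 2 / ((f.1 i : ℕ) : ℝ) ^ 2 := by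
  rw [mzetaStar_replicate, ← tsum_mul_right]
  refine tsum_congr fun f => ?_
  simp only [div_eq_mul_inv, Finset.prod_mul_distrib, Finset.prod_const, Finset.card_univ,
    Fintype.card_fin, Finset.prod_inv_distrib]
  ring

/-- exp(∑_{n≥1} ζ(2n)x^{2n}/n) = 1 + ∑_{n≥1} ζ*(2,…,2)x^{2n} for |x| < 1. -/
theorem exp_zeta_even_eq_zeta_star_twos (x : ℝ) (h : |x| < 1) :
    Real.exp (∑' n : ℕ, (∑' m : ℕ+, 1 / ((m : ℕ) : ℝ) ^ (2 * (n + 1))) *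
        x ^ (2 * (n + 1)) / ((n : ℝ) + 1)) =
      1 + ∑' n : ℕ, mzetaStar (List.replicate (n + 1) 2) * x ^ (2 * (n + 1)) := by
  set r : ℕ+ → ℝ := fun m => x ^ 2 / ((m : ℕ) : ℝ) ^ 2
  have hx : x ^ 2 < 1 := by rwa [sq_lt_one_iff_abs_lt_one]
  have hr0 : ∀ m, 0 ≤ r m := fun m => by positivity
  have hrx : ∀ m, r m ≤ x ^ 2 := fun m =>
    div_le_self (sq_nonneg x) (one_le_pow₀ (by exact_mod_cast m.pos))
  have hr : Summable r := by
    simpa [r, div_eq_mul_inv] using ((Real.summable_one_div_nat_pow.mpr one_lt_two).comp_injective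
      PNat.coe_injective).mul_left (x ^ 2)
  have hexp : ∀ n : ℕ, (∑' m : ℕ+, 1 / ((m : ℕ) : ℝ) ^ (2 * (n + 1))) * x ^ (2 * (n + 1)) /
      ((n : ℝ) + 1) = (∑' m, r m ^ (n + 1)) / (n + 1) := fun n => by
    rw [← tsum_mul_right]
    congr 1
    refine tsum_congr fun m => ?_
    simp only [r, div_pow, ← pow_mul]
    ring
  have hlog : HasSum (fun m => Real.log (1 - r m)⁻¹)
      (∑' n : ℕ, (∑' m, r m ^ (n + 1)) / (n + 1)) := by
    simpa only [Real.log_inv] using hasSum_neg_log_one_sub hr0 hrx hx hr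
  have hprod := Real.hasProd_of_hasSum_log (fun m => inv_pos.mpr (by linarith [hrx m])) hlog
  have hsum := hasSum_tsum_monotone_prod_of_hasProd hr0 (fun m => (hrx m).trans_lt hx) hprod
  rw [tsum_congr hexp, ← hsum.tsum_eq, hsum.summable.tsum_eq_zero_add, tsum_monotone_fin_zero_prod]
  simp only [r, mzetaStar_replicate_two_mul_pow]
end

section
/- For |x| < 1, exp( Σ_{n ≥ 1} (−1)^{n−1} ζ(3n) x^{3n} / n ) = 1 + Σ_{n ≥ 1} ζ(3,...,3) x^{3n} (with n threes), where ζ(3,...,3) = Σ_{0 < m_1 < ... < m_n} 1/(m_1³ ⋯ m_n³). -/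
open scoped BigOperators

/-!
Put `a m = x³ / m³`. Expanding each `log (1 + a m)` as a power series and exchanging the two
absolutely convergent sums turns the exponent into `∑ₘ log (1 + a m)`, so the left side is the
infinite product `∏ₘ (1 + a m)`. Expanding that product over finite sets of indices and grouping
the sets by cardinality `n` gives the elementary symmetric series of the `a m`, which is
`ζ(3,…,3) x³ⁿ`.
-/

section ElementarySymmetric

variable {ι : Type*} [LinearOrder ι]

noncomputable def strictMonoFinEquivPowersetCard (k : ℕ) :
    {g : Fin k → ι // StrictMono g} ≃ Set.powersetCard ι k where
  toFun g := ⟨Finset.univ.image g.1, by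
    simp [Finset.card_image_of_injective _ g.2.injective]⟩
  invFun s := ⟨s.1.orderEmbOfFin s.2, (s.1.orderEmbOfFin s.2).strictMono⟩
  left_inv g := Subtype.ext <| (Finset.orderEmbOfFin_unique _
    (fun j => Finset.mem_image_of_mem _ (Finset.mem_univ j)) g.2).symm
  right_inv s := Subtype.ext <| Finset.coe_injective <| by
    rw [Finset.coe_image, Finset.coe_univ, Set.image_univ]
    exact Finset.range_orderEmbOfFin s.1 s.2

section Semiring

variable {R : Type*} [CommSemiring R] [TopologicalSpace R]

theorem tsum_powersetCard_prod (f : ι → R) (k : ℕ) :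
    ∑' s : Set.powersetCard ι k, ∏ i ∈ s.1, f i =
      ∑' g : {g : Fin k → ι // StrictMono g}, ∏ j, f (g.1 j) := by
  rw [← (strictMonoFinEquivPowersetCard k).tsum_eq]
  exact tsum_congr fun g => Finset.prod_image fun i _ j _ hij => g.2.injective hij

theorem tsum_strictMono_fin_zero_prod (f : ι → R) :
    ∑' g : {g : Fin 0 → ι // StrictMono g}, ∏ j, f (g.1 j) = 1 := by
  rw [tsum_eq_single ⟨Fin.elim0, fun i => i.elim0⟩ fun g hg =>
    (hg (Subsingleton.elim _ _)).elim]
  simp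

end Semiring

variable {R : Type*} [NormedCommRing R] [NormOneClass R] [CompleteSpace R]

theorem hasSum_tsum_strictMono_prod {f : ι → R} (hf : Summable (‖f ·‖)) :
    HasSum (fun k => ∑' g : {g : Fin k → ι // StrictMono g}, ∏ j, f (g.1 j))
      (∏' i, (1 + f i)) := by
  have hs := summable_finsetProd_of_summable_norm hf
  rw [tprod_one_add hs]
  simp only [← tsum_powersetCard_prod]
  exact hs.hasSum.tsum_fiberwise Finset.card

theorem tprod_one_add_eq_one_add_tsum_strictMono {f : ι → R} (hf : Summable (‖f ·‖)) :
    ∏' i, (1 + f i) =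
      1 + ∑' k, ∑' g : {g : Fin (k + 1) → ι // StrictMono g}, ∏ j, f (g.1 j) := by
  rw [← (hasSum_tsum_strictMono_prod hf).tsum_eq,
    (hasSum_tsum_strictMono_prod hf).summable.tsum_eq_zero_add, tsum_strictMono_fin_zero_prod]

end ElementarySymmetric

open Real

theorem hasSum_log_one_add_of_abs_lt_one {x : ℝ} (hx : |x| < 1) :
    HasSum (fun n : ℕ => (-1) ^ n * x ^ (n + 1) / (n + 1)) (log (1 + x)) := by
  have h := (hasSum_pow_div_log_of_abs_lt_one (x := -x) (by rwa [abs_neg])).neg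
  rw [neg_neg, sub_neg_eq_add] at h
  refine h.congr_fun fun n => ?_
  rw [neg_pow, pow_succ]
  ring

theorem tsum_log_one_add_eq_tsum_tsum_pow {ι : Type*} {a : ι → ℝ} {r : ℝ} (hr₀ : 0 ≤ r)
    (hr₁ : r < 1) (har : ∀ i, |a i| ≤ r) (ha : Summable (|a ·|)) :
    ∑' i, log (1 + a i) = ∑' n : ℕ, (-1) ^ n * (∑' i, a i ^ (n + 1)) / (n + 1) := by
  set u : ℕ → ι → ℝ := fun n i => (-1) ^ n * a i ^ (n + 1) / (n + 1)
  have hlog i : HasSum (u · i) (log (1 + a i)) :=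
    hasSum_log_one_add_of_abs_lt_one ((har i).trans_lt hr₁)
  have hu : Summable (Function.uncurry u) := by
    refine Summable.of_norm_bounded ((summable_geometric_of_lt_one hr₀ hr₁).mul_of_nonneg ha
      (fun n => by positivity) fun i => abs_nonneg _) fun p => ?_
    have hp : (1 : ℝ) ≤ p.1 + 1 := by linarith [p.1.cast_nonneg (α := ℝ)]
    calc ‖u p.1 p.2‖ = |a p.2| ^ p.1 * |a p.2| / (p.1 + 1) := by
          simp [u, pow_succ, abs_of_pos (by linarith : (0 : ℝ) < p.1 + 1)]
      _ ≤ |a p.2| ^ p.1 * |a p.2| := div_le_self (by positivity) hp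
      _ ≤ r ^ p.1 * |a p.2| := by gcongr; exact har _
  calc ∑' i, log (1 + a i) = ∑' i, ∑' n, u n i := tsum_congr fun i => (hlog i).tsum_eq.symm
    _ = ∑' n, ∑' i, u n i :=
        hu.tsum_comm' (fun n => hu.prod_factor n) fun i => (hlog i).summable
    _ = _ := tsum_congr fun n => by simp only [u, tsum_div_const, tsum_mul_left]

theorem mzeta_replicate (k s : ℕ) :
    mzeta (List.replicate k s) =
      ∑' g : {g : Fin k → ℕ+ // StrictMono g}, ∏ j, (1 : ℝ) / ((g.1 j : ℕ) : ℝ) ^ s := by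
  -- `(List.replicate k s).length` is only propositionally `k`, so generalize the list first.
  suffices ∀ L : List ℕ, L.length = k → (∀ i, L.get i = s) →
      mzeta L = ∑' g : {g : Fin k → ℕ+ // StrictMono g}, ∏ j, (1 : ℝ) / ((g.1 j : ℕ) : ℝ) ^ s from
    this _ List.length_replicate fun i => List.eq_of_mem_replicate (List.get_mem _ i)
  rintro L rfl hL
  simp only [mzeta, hL]

theorem tsum_strictMono_prod_pow_div_pow (x : ℝ) (k s : ℕ) :
    ∑' g : {g : Fin k → ℕ+ // StrictMono g}, ∏ j, x ^ s / ((g.1 j : ℕ) : ℝ) ^ s =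
      mzeta (List.replicate k s) * x ^ (s * k) := by
  rw [mzeta_replicate, ← tsum_mul_right]
  refine tsum_congr fun g => ?_
  simp_rw [div_eq_mul_one_div (x ^ s)]
  rw [Finset.prod_mul_distrib, Finset.prod_const, Finset.card_univ, Fintype.card_fin, mul_comm,
    pow_mul]

/-- exp(∑_{n≥1} (−1)^{n−1} ζ(3n)x^{3n}/n) = 1 + ∑_{n≥1} ζ(3,…,3)x^{3n} for |x| < 1. -/
theorem exp_zeta_triple_eq_mzeta_threes (x : ℝ) (h : |x| < 1) :
    Real.exp (∑' n : ℕ, (-1 : ℝ) ^ n * (∑' m : ℕ+, 1 / ((m : ℕ) : ℝ) ^ (3 * (n + 1))) *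
        x ^ (3 * (n + 1)) / ((n : ℝ) + 1)) =
      1 + ∑' n : ℕ, mzeta (List.replicate (n + 1) 3) * x ^ (3 * (n + 1)) := by
  set a : ℕ+ → ℝ := fun m => x ^ 3 / ((m : ℕ) : ℝ) ^ 3
  have ha : Summable (|a ·|) := by
    have hζ : Summable fun m : ℕ+ => 1 / ((m : ℕ) : ℝ) ^ 3 :=
      summable_pnat_iff_summable_nat.2 (summable_one_div_nat_pow.2 (by norm_num))
    simpa [a, abs_div, div_eq_mul_one_div (|x| ^ 3)] using hζ.mul_left (|x| ^ 3)
  have har m : |a m| ≤ |x| ^ 3 := by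
    rw [abs_div, abs_pow, abs_pow, Nat.abs_cast]
    exact div_le_self (by positivity) (one_le_pow₀ (Nat.one_le_cast.2 m.pos))
  have hx3 : |x| ^ 3 < 1 := pow_lt_one₀ (abs_nonneg x) h (by norm_num)
  have hpos m : 0 < 1 + a m := by linarith [neg_abs_le (a m), har m]
  calc _ = rexp (∑' n : ℕ, (-1) ^ n * (∑' m, a m ^ (n + 1)) / (n + 1)) := by
        congr 1
        refine tsum_congr fun n => ?_
        simp only [a, div_pow, ← pow_mul, mul_assoc, ← tsum_mul_right, one_div_mul_eq_div]
    _ = rexp (∑' m, log (1 + a m)) := by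
        rw [tsum_log_one_add_eq_tsum_tsum_pow (by positivity) hx3 har ha]
    _ = ∏' m, (1 + a m) :=
        rexp_tsum_eq_tprod (f := fun m => 1 + a m) hpos (summable_log_one_add_of_summable ha.of_abs)
    _ = _ := by
        rw [tprod_one_add_eq_one_add_tsum_strictMono (by simpa only [Real.norm_eq_abs] using ha)]
        simp only [a, tsum_strictMono_prod_pow_div_pow]
end

section
/- Sum formula for maximal-height MZVs: letting T(k) = Σ ζ(k_1,...,k_r) over all r ≥ 1 and k_1+...+k_r = k with every k_i ≥ 2, one has, as an identity of convergent power series for |x| < 1, 1 + Σ_{k ≥ 2} T(k) x^k = (1 + Σ_{n ≥ 1} ζ*(2,...,2) x^{2n}) · (1 + Σ_{n ≥ 1} ζ(3,...,3) x^{3n}). -/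
open scoped BigOperators

/-- T(k), the sum of all multiple zeta values of weight k and maximal height
(all entries ≥ 2). -/
noncomputable def T (k : ℕ) : ℝ :=
  ∑' l : {l : List ℕ // l ≠ [] ∧ (∀ i ∈ l, 2 ≤ i) ∧ l.sum = k}, mzeta l.1

/-!
Encode a maximal-height index `(k₁, …, k_r)` together with summation variables `m₁ < ⋯ < m_r`
as the exponent vector `e : ℕ+ →₀ ℕ` with `e mᵢ = kᵢ`; maximal height means that no exponent
equals `1`. Then `1 + ∑ T(k) xᵏ` is the sum of `∏ₘ (x / m) ^ e m` over all such `e`, which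
converges absolutely for `|x| < 1`. Every `k ≠ 1` is uniquely `2a + 3b` with `b ∈ {0, 1}`, so
`e = 2μ + 3·1_S` for a unique multiset `μ` and finite set `S`, and the sum factors into a sum
over multisets (tuples `m₁ ≤ ⋯ ≤ m_n` with exponents `2`, the `ζ*(2,…,2)` series) times a sum
over finite sets (tuples `m₁ < ⋯ < m_n` with exponents `3`, the `ζ(3,…,3)` series).
-/

namespace MaxHeightSum

open Finset

lemma hasSum_tsum_sigma_of_equiv {E : Type*} [NormedAddCommGroup E] [CompleteSpace E]
    {ι γ : Type*} {β : ι → Type*} (e : (Σ i, β i) ≃ γ) {g : γ → E} {a : E} (h : HasSum g a) :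
    HasSum (fun i => ∑' b, g (e ⟨i, b⟩)) a :=
  have h' := e.hasSum_iff.mpr h
  h'.sigma fun i => (h'.summable.sigma_factor i).hasSum

section SortedTuples

variable {α : Type*} [LinearOrder α]

def strictMonoEquivOrderEmbedding (n : ℕ) : {f : Fin n → α // StrictMono f} ≃ (Fin n ↪o α) where
  toFun f := OrderEmbedding.ofStrictMono f.1 f.2
  invFun g := ⟨g, g.strictMono⟩
  left_inv _ := rfl
  right_inv _ := rfl

def sigmaStrictMonoEquivFinset : (Σ n, {f : Fin n → α // StrictMono f}) ≃ Finset α :=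
  (Equiv.sigmaCongrRight fun n =>
      ((strictMonoEquivOrderEmbedding n).trans Set.powersetCard.ofFinEmbEquiv).trans
        (Equiv.subtypeEquivRight fun _ => Set.powersetCard.mem_iff)).trans
    (Equiv.sigmaFiberEquiv Finset.card)

lemma sigmaStrictMonoEquivFinset_apply (p : Σ n, {f : Fin n → α // StrictMono f}) :
    sigmaStrictMonoEquivFinset p = univ.map ⟨p.2.1, p.2.2.injective⟩ :=
  rfl

lemma prod_sigmaStrictMonoEquivFinset {M : Type*} [CommMonoid M] (φ : α → M)
    (p : Σ n, {f : Fin n → α // StrictMono f}) :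
    ∏ a ∈ sigmaStrictMonoEquivFinset p, φ a = ∏ i, φ (p.2.1 i) := by
  rw [sigmaStrictMonoEquivFinset_apply, prod_map]
  rfl

noncomputable def sigmaMonotoneEquivMultiset :
    (Σ n, {f : Fin n → α // Monotone f}) ≃ Multiset α := by
  refine Equiv.ofBijective (fun p => (List.ofFn p.2.1 : Multiset α)) ⟨?_, fun M => ?_⟩
  · rintro ⟨n, f, hf⟩ ⟨n', f', hf'⟩ h
    have hperm := Multiset.coe_eq_coe.mp h
    obtain rfl : n = n' := by simpa using hperm.length_eq
    obtain rfl : f = f' :=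
      List.ofFn_injective (hperm.eq_of_sortedLE hf.sortedLE_ofFn hf'.sortedLE_ofFn)
    rfl
  · refine ⟨⟨_, (M.sort (· ≤ ·)).get, (M.pairwise_sort _).sortedLE.monotone_get⟩, ?_⟩
    simp only [List.ofFn_get]
    exact M.sort_eq _

lemma prod_map_sigmaMonotoneEquivMultiset {M : Type*} [CommMonoid M] (φ : α → M)
    (p : Σ n, {f : Fin n → α // Monotone f}) :
    ((sigmaMonotoneEquivMultiset p).map φ).prod = ∏ i, φ (p.2.1 i) := by
  change ((List.ofFn p.2.1 : Multiset α).map φ).prod = _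
  rw [Multiset.map_coe, List.map_ofFn, Multiset.prod_coe, List.prod_ofFn]
  rfl

noncomputable def strictMonoTupleSum (φ : α → ℝ) (n : ℕ) : ℝ :=
  ∑' f : {f : Fin n → α // StrictMono f}, ∏ i, φ (f.1 i)

noncomputable def monotoneTupleSum (φ : α → ℝ) (n : ℕ) : ℝ :=
  ∑' f : {f : Fin n → α // Monotone f}, ∏ i, φ (f.1 i)

lemma strictMonoTupleSum_zero (φ : α → ℝ) : strictMonoTupleSum φ 0 = 1 := by
  rw [strictMonoTupleSum, tsum_eq_single ⟨Fin.elim0, fun a => a.elim0⟩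
    fun f hf => (hf (Subsingleton.elim _ _)).elim]
  simp

lemma monotoneTupleSum_zero (φ : α → ℝ) : monotoneTupleSum φ 0 = 1 := by
  rw [monotoneTupleSum, tsum_eq_single ⟨Fin.elim0, fun a => a.elim0⟩
    fun f hf => (hf (Subsingleton.elim _ _)).elim]
  simp

lemma strictMonoTupleSum_mul_pow (φ : α → ℝ) (c : ℝ) (n : ℕ) :
    strictMonoTupleSum φ n * c ^ n = strictMonoTupleSum (fun a => φ a * c) n := by
  simp only [strictMonoTupleSum, ← tsum_mul_right, prod_mul_distrib, prod_const, card_univ,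
    Fintype.card_fin]

lemma monotoneTupleSum_mul_pow (φ : α → ℝ) (c : ℝ) (n : ℕ) :
    monotoneTupleSum φ n * c ^ n = monotoneTupleSum (fun a => φ a * c) n := by
  simp only [monotoneTupleSum, ← tsum_mul_right, prod_mul_distrib, prod_const, card_univ,
    Fintype.card_fin]

lemma hasSum_strictMonoTupleSum {φ : α → ℝ} {a : ℝ}
    (h : HasSum (fun s : Finset α => ∏ x ∈ s, φ x) a) : HasSum (strictMonoTupleSum φ) a := by
  have h' := hasSum_tsum_sigma_of_equiv sigmaStrictMonoEquivFinset h
  simp only [prod_sigmaStrictMonoEquivFinset] at h'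
  exact h'

lemma hasSum_monotoneTupleSum {φ : α → ℝ} {a : ℝ}
    (h : HasSum (fun M : Multiset α => (M.map φ).prod) a) : HasSum (monotoneTupleSum φ) a := by
  have h' := hasSum_tsum_sigma_of_equiv sigmaMonotoneEquivMultiset h
  simp only [prod_map_sigmaMonotoneEquivMultiset] at h'
  exact h'

end SortedTuples

lemma mzeta_eq_strictMonoTupleSum {ks : List ℕ} {c : ℕ} (h : ∀ k ∈ ks, k = c) :
    mzeta ks = strictMonoTupleSum (fun m : ℕ+ => 1 / ((m : ℕ) : ℝ) ^ c) ks.length :=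
  tsum_congr fun _ => prod_congr rfl fun i _ => by rw [h _ (ks.get_mem i)]

lemma mzetaStar_eq_monotoneTupleSum {ks : List ℕ} {c : ℕ} (h : ∀ k ∈ ks, k = c) :
    mzetaStar ks = monotoneTupleSum (fun m : ℕ+ => 1 / ((m : ℕ) : ℝ) ^ c) ks.length :=
  tsum_congr fun _ => prod_congr rfl fun i _ => by rw [h _ (ks.get_mem i)]

lemma one_div_pow_mul_pow (x y : ℝ) (c : ℕ) : 1 / y ^ c * x ^ c = (x / y) ^ c := by
  rw [div_pow, one_div_mul_eq_div]

lemma mzeta_replicate_mul_pow (n c : ℕ) (x : ℝ) :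
    mzeta (List.replicate n c) * x ^ (c * n) =
      strictMonoTupleSum (fun m : ℕ+ => (x / ((m : ℕ) : ℝ)) ^ c) n := by
  rw [mzeta_eq_strictMonoTupleSum fun _ => List.eq_of_mem_replicate, List.length_replicate,
    pow_mul, strictMonoTupleSum_mul_pow]
  simp only [one_div_pow_mul_pow]

lemma mzetaStar_replicate_mul_pow (n c : ℕ) (x : ℝ) :
    mzetaStar (List.replicate n c) * x ^ (c * n) =
      monotoneTupleSum (fun m : ℕ+ => (x / ((m : ℕ) : ℝ)) ^ c) n := by
  rw [mzetaStar_eq_monotoneTupleSum fun _ => List.eq_of_mem_replicate, List.length_replicate,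
    pow_mul, monotoneTupleSum_mul_pow]
  simp only [one_div_pow_mul_pow]

lemma one_add_tsum_mzeta_replicate {c : ℕ} {x a : ℝ}
    (h : HasSum (fun s : Finset ℕ+ => ∏ m ∈ s, (x / ((m : ℕ) : ℝ)) ^ c) a) :
    1 + ∑' n : ℕ, mzeta (List.replicate (n + 1) c) * x ^ (c * (n + 1)) = a := by
  have hs := hasSum_strictMonoTupleSum h
  rw [← hs.tsum_eq, hs.summable.tsum_eq_zero_add, strictMonoTupleSum_zero]
  simp only [mzeta_replicate_mul_pow]

lemma one_add_tsum_mzetaStar_replicate {c : ℕ} {x a : ℝ}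
    (h : HasSum (fun M : Multiset ℕ+ => (M.map fun m : ℕ+ => (x / ((m : ℕ) : ℝ)) ^ c).prod) a) :
    1 + ∑' n : ℕ, mzetaStar (List.replicate (n + 1) c) * x ^ (c * (n + 1)) = a := by
  have hs := hasSum_monotoneTupleSum h
  rw [← hs.tsum_eq, hs.summable.tsum_eq_zero_add, monotoneTupleSum_zero]
  simp only [mzetaStar_replicate_mul_pow]

lemma summable_finsupp_prod {α : Type*} {c : α → ℕ → ℝ} (hc : ∀ a k, 0 ≤ c a k)
    (hc0 : ∀ a, c a 0 = 1) (hc_summable : ∀ a, Summable (c a))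
    (htail : Summable fun a => ∑' k, c a (k + 1)) :
    Summable fun e : α →₀ ℕ => e.prod c := by
  classical
  -- The restrictions of finitely many `e` to the union `S` of their supports lie in a box over
  -- `S`, whose sum is `∏_{a ∈ S} ∑_k c a k ≤ exp (∑_{a ∈ S} ∑_k c a (k + 1))`.
  refine summable_of_sum_le (c := Real.exp (∑' a, ∑' k, c a (k + 1)))
    (fun e => prod_nonneg fun a _ => hc a _) fun F => ?_
  set S := F.sup Finsupp.support
  let restrict : (α →₀ ℕ) → (S → ℕ) := fun e a => e a
  let t : S → Finset ℕ := fun a => F.image (· a)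
  have hsub : ∀ e ∈ F, e.support ⊆ S := fun e he => le_sup (f := Finsupp.support) he
  have hprod : ∀ e ∈ F, e.prod c = ∏ a : S, c a (restrict e a) := fun e he => by
    rw [Finsupp.prod_of_support_subset e (hsub e he) c fun a _ => hc0 a, ← prod_coe_sort]
  have hinj : Set.InjOn restrict F := by
    intro e he e' he' h
    ext a
    by_cases ha : a ∈ S
    · exact congrFun h ⟨a, ha⟩
    · rw [Finsupp.notMem_support_iff.mp fun h => ha (hsub e he h),
        Finsupp.notMem_support_iff.mp fun h => ha (hsub e' he' h)]
  have hfactor (a : S) : ∑ k ∈ t a, c a k ≤ Real.exp (∑' k, c a (k + 1)) :=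
    calc ∑ k ∈ t a, c a k ≤ ∑' k, c a k := (hc_summable a).sum_le_tsum _ fun k _ => hc a k
      _ = ∑' k, c a (k + 1) + 1 := by rw [(hc_summable a).tsum_eq_zero_add, hc0, add_comm]
      _ ≤ _ := Real.add_one_le_exp _
  calc ∑ e ∈ F, e.prod c = ∑ v ∈ F.image restrict, ∏ a : S, c a (v a) := by
        rw [sum_image hinj]; exact sum_congr rfl hprod
    _ ≤ ∑ v ∈ Fintype.piFinset t, ∏ a : S, c a (v a) := by
        refine sum_le_sum_of_subset_of_nonneg ?_ fun v _ _ => prod_nonneg fun a _ => hc a _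
        intro v hv
        obtain ⟨e, he, rfl⟩ := mem_image.mp hv
        exact Fintype.mem_piFinset.mpr fun a => mem_image_of_mem _ he
    _ = ∏ a : S, ∑ k ∈ t a, c a k := (prod_univ_sum t _).symm
    _ ≤ ∏ a : S, Real.exp (∑' k, c a (k + 1)) :=
        prod_le_prod (fun a _ => sum_nonneg fun k _ => hc a k) fun a _ => hfactor a
    _ = Real.exp (∑ a ∈ S, ∑' k, c a (k + 1)) := by
        rw [← Real.exp_sum, sum_coe_sort S fun a => ∑' k, c a (k + 1)]
    _ ≤ Real.exp (∑' a, ∑' k, c a (k + 1)) :=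
        Real.exp_le_exp.mpr (htail.sum_le_tsum _ fun a _ => tsum_nonneg fun k => hc a _)

noncomputable def weight (x : ℝ) (e : ℕ+ →₀ ℕ) : ℝ :=
  e.prod fun m k => (x / ((m : ℕ) : ℝ)) ^ k

abbrev Admissible : Type := {e : ℕ+ →₀ ℕ // ∀ m, e m ≠ 1}

lemma abs_div_pow_le (x : ℝ) (m : ℕ+) {k : ℕ} (hk : 2 ≤ k) :
    |x / ((m : ℕ) : ℝ)| ^ k ≤ |x| ^ k * (((m : ℕ) : ℝ) ^ 2)⁻¹ := by
  have hm : (1 : ℝ) ≤ (m : ℕ) := Nat.one_le_cast.mpr m.pos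
  rw [abs_div, Nat.abs_cast, div_pow, div_eq_mul_inv]
  gcongr

lemma summable_weight {x : ℝ} (hx : |x| < 1) : Summable fun e : Admissible => weight x e.1 := by
  let c : ℕ+ → ℕ → ℝ := fun m k => if k = 0 then 1 else |x| ^ k * (((m : ℕ) : ℝ) ^ 2)⁻¹
  have hc : ∀ m k, 0 ≤ c m k := fun m k => by positivity
  have htail (m : ℕ+) : HasSum (fun k => c m (k + 1))
      (|x| * (1 - |x|)⁻¹ * (((m : ℕ) : ℝ) ^ 2)⁻¹) := by
    have h := ((hasSum_geometric_of_lt_one (abs_nonneg x) hx).mul_left |x|).mul_right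
      (((m : ℕ) : ℝ) ^ 2)⁻¹
    simp only [← pow_succ'] at h
    exact h
  have hsq : Summable fun m : ℕ+ => (((m : ℕ) : ℝ) ^ 2)⁻¹ := by
    simpa [Function.comp_def] using
      (Real.summable_one_div_nat_pow.mpr one_lt_two).comp_injective PNat.coe_injective
  have hprod := summable_finsupp_prod hc (fun m => if_pos rfl)
    (fun m => (summable_nat_add_iff 1).mp (htail m).summable)
    (by simpa only [fun m => (htail m).tsum_eq] using hsq.mul_left (|x| * (1 - |x|)⁻¹))
  refine Summable.of_abs (Summable.of_nonneg_of_le (fun _ => abs_nonneg _) (fun e => ?_)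
    (hprod.comp_injective Subtype.val_injective))
  rw [weight, Finsupp.prod, Function.comp_apply, Finsupp.prod, abs_prod]
  refine prod_le_prod (fun _ _ => abs_nonneg _) fun m hm => ?_
  have hem : 2 ≤ e.1 m := by
    have := e.2 m; have := Finsupp.mem_support_iff.mp hm; omega
  rw [abs_pow, show c m (e.1 m) = _ from if_neg (by omega)]
  exact abs_div_pow_le x m hem

lemma weight_toFinsupp (x : ℝ) (M : Multiset ℕ+) :
    weight x (Multiset.toFinsupp M) = (M.map fun m : ℕ+ => x / ((m : ℕ) : ℝ)).prod := by
  rw [weight, Finsupp.prod, Multiset.toFinsupp_support, Finset.prod_multiset_map_count]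
  simp only [Multiset.toFinsupp_apply]

lemma count_two_nsmul_add_three_nsmul (N : Multiset ℕ+) (s : Finset ℕ+) (m : ℕ+) :
    (2 • N + 3 • s.val).count m = 2 * N.count m + 3 * if m ∈ s then 1 else 0 := by
  simp only [Multiset.count_add, Multiset.count_nsmul, Multiset.count_eq_of_nodup s.nodup,
    Finset.mem_val]

noncomputable def splitEquiv : Multiset ℕ+ × Finset ℕ+ ≃ Admissible where
  toFun p := ⟨Multiset.toFinsupp (2 • p.1 + 3 • p.2.val), fun m => by
    rw [Multiset.toFinsupp_apply, count_two_nsmul_add_three_nsmul]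
    split_ifs <;> omega⟩
  -- `k = 2 a + 3 b` with `b = k % 2`
  invFun e := (Finsupp.toMultiset (e.1.mapRange (fun k => (k - 3 * (k % 2)) / 2) rfl),
    e.1.support.filter fun m => e.1 m % 2 = 1)
  left_inv := by
    rintro ⟨N, s⟩
    refine Prod.ext (Multiset.ext.mpr fun m => ?_) (Finset.ext fun m => ?_)
    · simp only [Finsupp.count_toMultiset, Finsupp.mapRange_apply, Multiset.toFinsupp_apply,
        count_two_nsmul_add_three_nsmul]
      split_ifs <;> omega
    · simp only [mem_filter, Finsupp.mem_support_iff, Multiset.toFinsupp_apply,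
        count_two_nsmul_add_three_nsmul]
      split_ifs with hm <;> simp only [hm, iff_true, iff_false] <;> omega
  right_inv := by
    rintro ⟨e, he⟩
    refine Subtype.ext (Finsupp.ext fun m => ?_)
    have := he m
    simp only [Multiset.toFinsupp_apply, count_two_nsmul_add_three_nsmul,
      Finsupp.count_toMultiset, Finsupp.mapRange_apply, mem_filter, Finsupp.mem_support_iff]
    split_ifs <;> omega

lemma weight_splitEquiv (x : ℝ) (p : Multiset ℕ+ × Finset ℕ+) :
    weight x (splitEquiv p).1 = (p.1.map fun m : ℕ+ => (x / ((m : ℕ) : ℝ)) ^ 2).prod *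
      ∏ m ∈ p.2, (x / ((m : ℕ) : ℝ)) ^ 3 := by
  change weight x (Multiset.toFinsupp _) = _
  rw [weight_toFinsupp, Multiset.map_add, Multiset.prod_add, Multiset.map_nsmul,
    Multiset.map_nsmul, Multiset.prod_nsmul, Multiset.prod_nsmul, Multiset.prod_map_pow,
    prod_pow, prod_eq_multiset_prod]

section Pack

variable {α : Type*} {n : ℕ}

noncomputable def pack (f : Fin n → α) (v : Fin n → ℕ) : α →₀ ℕ :=
  Finsupp.mapDomain f (Finsupp.equivFunOnFinite.symm v)

lemma pack_apply {f : Fin n → α} (hf : Function.Injective f) (v : Fin n → ℕ) (i : Fin n) :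
    pack f v (f i) = v i := by
  simp [pack, Finsupp.mapDomain_apply hf]

lemma pack_apply_of_notMem_range (f : Fin n → α) (v : Fin n → ℕ) {a : α}
    (ha : a ∉ Set.range f) : pack f v a = 0 :=
  Finsupp.mapDomain_of_notMem_range _ a ha

lemma support_pack [DecidableEq α] {f : Fin n → α} (hf : Function.Injective f) {v : Fin n → ℕ}
    (hv : ∀ i, v i ≠ 0) : (pack f v).support = univ.map ⟨f, hf⟩ := by
  rw [pack, Finsupp.mapDomain_support_of_injective hf, map_eq_image]
  congr
  ext i
  simp [hv i]

lemma prod_pack {M : Type*} [CommMonoid M] {f : Fin n → α} (hf : Function.Injective f)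
    (v : Fin n → ℕ) {g : α → ℕ → M} (hg : ∀ a, g a 0 = 1) :
    (pack f v).prod g = ∏ i, g (f i) (v i) := by
  rw [pack, Finsupp.prod_mapDomain_index_inj hf, Finsupp.prod_fintype _ _ fun i => hg (f i)]
  rfl

end Pack

def sigmaFiberSwapEquiv {L : Type*} (len : L → ℕ) (β : ℕ → Type*) :
    (Σ p : Σ n, β n, {l : L // len l = p.1}) ≃ Σ l : L, β (len l) where
  toFun := fun ⟨⟨_, b⟩, ⟨l, hl⟩⟩ => ⟨l, (hl ▸ b : β (len l))⟩
  invFun q := ⟨⟨len q.1, q.2⟩, ⟨q.1, rfl⟩⟩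
  left_inv := by
    rintro ⟨⟨n, b⟩, ⟨l, hl⟩⟩
    change len l = n at hl
    subst hl
    rfl
  right_inv _ := rfl

abbrev MaxHeightIndex : Type := {l : List ℕ // ∀ k ∈ l, 2 ≤ k}

lemma MaxHeightIndex.two_le_get (l : MaxHeightIndex) (i : Fin l.1.length) : 2 ≤ l.1.get i :=
  l.2 _ (List.get_mem _ _)

noncomputable def packEquiv :
    (Σ p : Σ n, {f : Fin n → ℕ+ // StrictMono f}, {l : MaxHeightIndex // l.1.length = p.1}) ≃
      Admissible := by
  classical
  refine Equiv.ofBijective (fun q => ⟨pack q.1.2.1 fun i => q.2.1.1.get (Fin.cast q.2.2.symm i),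
    fun m => ?_⟩) ⟨?_, fun e => ?_⟩
  · by_cases hm : m ∈ Set.range q.1.2.1
    · obtain ⟨i, rfl⟩ := hm
      have := q.2.1.two_le_get (Fin.cast q.2.2.symm i)
      rw [pack_apply q.1.2.2.injective]
      omega
    · rw [pack_apply_of_notMem_range _ _ hm]
      omega
  · rintro ⟨⟨n, f⟩, ⟨l, hl⟩⟩ ⟨⟨n', f'⟩, ⟨l', hl'⟩⟩ h
    have h' := congrArg Subtype.val h
    -- equal supports force equal increasing tuples, and then equal exponent lists
    have hsupp : sigmaStrictMonoEquivFinset ⟨n, f⟩ = sigmaStrictMonoEquivFinset ⟨n', f'⟩ := by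
      rw [sigmaStrictMonoEquivFinset_apply, sigmaStrictMonoEquivFinset_apply,
        ← support_pack f.2.injective fun _ => (two_pos.trans_le (l.two_le_get _)).ne',
        ← support_pack f'.2.injective fun _ => (two_pos.trans_le (l'.two_le_get _)).ne']
      exact congrArg Finsupp.support h'
    obtain ⟨rfl, hf⟩ := Sigma.mk.inj_iff.mp (sigmaStrictMonoEquivFinset.injective hsupp)
    obtain rfl := eq_of_heq hf
    obtain rfl : l = l' := Subtype.ext <| List.ext_get (hl.trans hl'.symm) fun i h1 h2 => by
      have := congrArg (fun e : ℕ+ →₀ ℕ => e (f.1 ⟨i, h1.trans_eq hl⟩)) h'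
      simp only [pack_apply f.2.injective] at this
      exact this
    rfl
  · set g := e.1.support.orderEmbOfFin rfl
    refine ⟨⟨⟨_, g, g.strictMono⟩, ⟨⟨List.ofFn fun i => e.1 (g i), fun k hk => ?_⟩,
      List.length_ofFn⟩⟩, Subtype.ext (Finsupp.ext fun m => ?_)⟩
    · obtain ⟨i, rfl⟩ := (List.mem_ofFn' _ _).mp hk
      show 2 ≤ e.1 (g i)
      have := e.2 (g i)
      have : e.1 (g i) ≠ 0 := Finsupp.mem_support_iff.mp (e.1.support.orderEmbOfFin_mem rfl i)
      omega
    · by_cases hm : m ∈ Set.range g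
      · obtain ⟨i, rfl⟩ := hm
        simp [pack_apply g.injective]
      · rw [pack_apply_of_notMem_range _ _ hm, eq_comm, ← Finsupp.notMem_support_iff]
        rwa [Finset.range_orderEmbOfFin] at hm

noncomputable def maxHeightEquiv :
    (Σ l : MaxHeightIndex, {f : Fin l.1.length → ℕ+ // StrictMono f}) ≃ Admissible :=
  (sigmaFiberSwapEquiv (fun l : MaxHeightIndex => l.1.length) _).symm.trans packEquiv

lemma weight_maxHeightEquiv (x : ℝ)
    (p : Σ l : MaxHeightIndex, {f : Fin l.1.length → ℕ+ // StrictMono f}) :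
    weight x (maxHeightEquiv p).1 = ∏ i, (x / ((p.2.1 i : ℕ) : ℝ)) ^ p.1.1.get i :=
  prod_pack p.2.2.injective _ fun _ => pow_zero _

lemma mzeta_mul_pow_sum (l : List ℕ) (x : ℝ) :
    mzeta l * x ^ l.sum =
      ∑' f : {f : Fin l.length → ℕ+ // StrictMono f}, ∏ i, (x / ((f.1 i : ℕ) : ℝ)) ^ l.get i := by
  have hsum : l.sum = ∑ i, l.get i := by rw [← List.sum_ofFn, List.ofFn_get]
  rw [mzeta, ← tsum_mul_right]
  refine tsum_congr fun f => ?_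
  rw [hsum, ← prod_pow_eq_pow_sum, ← prod_mul_distrib]
  exact prod_congr rfl fun i _ => one_div_pow_mul_pow _ _ _

lemma hasSum_mzeta_mul_pow {x a : ℝ} (h : HasSum (fun e : Admissible => weight x e.1) a) :
    HasSum (fun l : MaxHeightIndex => mzeta l.1 * x ^ l.1.sum) a := by
  have h' := hasSum_tsum_sigma_of_equiv maxHeightEquiv h
  simp only [weight_maxHeightEquiv, ← mzeta_mul_pow_sum] at h'
  exact h'

lemma two_le_sum {l : List ℕ} (hl : ∀ k ∈ l, 2 ≤ k) (hne : l ≠ []) : 2 ≤ l.sum :=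
  have ⟨a, ha⟩ := List.exists_mem_of_ne_nil l hne
  (hl a ha).trans (List.le_sum_of_mem ha)

lemma T_one : T 1 = 0 := by
  have : IsEmpty {l : List ℕ // l ≠ [] ∧ (∀ i ∈ l, 2 ≤ i) ∧ l.sum = 1} :=
    ⟨fun ⟨_, hne, hl, hsum⟩ => by have := two_le_sum hl hne; omega⟩
  exact tsum_empty

lemma tsum_mzeta_mul_pow_of_sum_eq_zero (x : ℝ) :
    ∑' l : {l : MaxHeightIndex // l.1.sum = 0}, mzeta l.1.1 * x ^ l.1.1.sum = 1 := by
  have hnil (l : {l : MaxHeightIndex // l.1.sum = 0}) : l.1.1 = [] := by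
    by_contra hl
    have := two_le_sum l.1.2 hl
    omega
  rw [tsum_eq_single ⟨⟨[], by simp⟩, rfl⟩ fun l hl =>
      (hl (Subtype.ext (Subtype.ext (hnil l)))).elim,
    mzeta_eq_strictMonoTupleSum (ks := []) (c := 0) (by simp)]
  simp [strictMonoTupleSum_zero]

lemma tsum_mzeta_mul_pow_of_sum_eq {k : ℕ} (hk : k ≠ 0) (x : ℝ) :
    ∑' l : {l : MaxHeightIndex // l.1.sum = k}, mzeta l.1.1 * x ^ l.1.1.sum = T k * x ^ k := by
  let e : {l : MaxHeightIndex // l.1.sum = k} ≃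
      {l : List ℕ // l ≠ [] ∧ (∀ i ∈ l, 2 ≤ i) ∧ l.sum = k} :=
    (Equiv.subtypeSubtypeEquivSubtypeInter (fun l : List ℕ => ∀ i ∈ l, 2 ≤ i) (·.sum = k)).trans <|
      Equiv.subtypeEquivRight fun l =>
        ⟨fun hl => ⟨by rintro rfl; exact hk hl.2.symm, hl⟩, fun hl => hl.2⟩
  rw [T, ← tsum_mul_right, ← e.tsum_eq]
  exact tsum_congr fun l => by rw [l.2]; rfl

lemma one_add_tsum_T_mul_pow {x a : ℝ}
    (h : HasSum (fun l : MaxHeightIndex => mzeta l.1 * x ^ l.1.sum) a) :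
    1 + ∑' k : ℕ, T (k + 2) * x ^ (k + 2) = a := by
  have h' := (hasSum_nat_add_iff' 2).mpr
    (hasSum_tsum_sigma_of_equiv (Equiv.sigmaFiberEquiv fun l : MaxHeightIndex => l.1.sum) h)
  simp only [Equiv.sigmaFiberEquiv_apply, sum_range_succ, sum_range_zero,
    tsum_mzeta_mul_pow_of_sum_eq_zero, tsum_mzeta_mul_pow_of_sum_eq one_ne_zero, T_one,
    tsum_mzeta_mul_pow_of_sum_eq (Nat.succ_ne_zero _)] at h'
  rw [h'.tsum_eq]
  ring

end MaxHeightSum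

/-- Sum formula for maximal-height MZVs:
1 + ∑_{k≥2} T(k)xᵏ = (1 + ∑_{n≥1} ζ*(2,…,2)x^{2n})(1 + ∑_{n≥1} ζ(3,…,3)x^{3n}). -/
theorem maximal_height_sum_formula (x : ℝ) (h : |x| < 1) :
    1 + ∑' k : ℕ, T (k + 2) * x ^ (k + 2) =
      (1 + ∑' n : ℕ, mzetaStar (List.replicate (n + 1) 2) * x ^ (2 * (n + 1))) *
        (1 + ∑' n : ℕ, mzeta (List.replicate (n + 1) 3) * x ^ (3 * (n + 1))) := by
  have hw := MaxHeightSum.summable_weight h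
  have hAB := (MaxHeightSum.splitEquiv.summable_iff.mpr hw).congr (MaxHeightSum.weight_splitEquiv x)
  have hA := hAB.comp_injective (Prod.mk_left_injective (∅ : Finset ℕ+))
  have hB := hAB.prod_factor 0
  simp only [Function.comp_def, Finset.prod_empty, mul_one, Multiset.map_zero, Multiset.prod_zero,
    one_mul] at hA hB
  rw [MaxHeightSum.one_add_tsum_T_mul_pow (MaxHeightSum.hasSum_mzeta_mul_pow hw.hasSum),
    MaxHeightSum.one_add_tsum_mzetaStar_replicate hA.hasSum,
    MaxHeightSum.one_add_tsum_mzeta_replicate hB.hasSum, hA.tsum_mul_tsum hB hAB,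
    ← MaxHeightSum.splitEquiv.tsum_eq]
  exact tsum_congr (MaxHeightSum.weight_splitEquiv x)
end

section
/- For each fixed weight k ≥ 2, the sum T(k) of all multiple zeta values of weight k with all entries ≥ 2 satisfies T(k) = Σ_{2a + 3b = k, a,b ≥ 0} ζ*(2,...,2) (a twos) · ζ(3,...,3) (b threes), with empty products interpreted as 1. -/
open scoped BigOperators

/-!
Everything is first proved in `ℝ≥0∞`, where nonnegative series can be reindexed and regrouped
freely; all series involved are finite since their exponents are at least `2`.

A term of `T k` is a list `l` of exponents `≥ 2` with sum `k` together with a strictly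
increasing `m : Fin r → ℕ+`. Placing the exponent `lᵢ` at `mᵢ` identifies these pairs with the
finitely supported `φ : ℕ+ →₀ ℕ` of degree `k` that never take the value `1`, the term being
`∏ v, v ^ (-φ v)`. Every natural number other than `1` is uniquely `2a + 3ε` with `ε ∈ {0, 1}`,
so such `φ` are exactly `2c + 3·𝟙_S` with `2 deg c + 3 |S| = k`. Finally the `c` of degree `a`
are the multisets of size `a`, i.e. the monotone `a`-tuples indexing `ζ*(2,…,2)`, and the `S`
of size `b` are the strictly increasing `b`-tuples indexing `ζ(3,…,3)`.
-/

open scoped ENNReal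

theorem List.forall_two_le_iff {l : List ℕ} : (∀ i ∈ l, 2 ≤ i) ↔ 0 ∉ l ∧ 1 ∉ l := by
  refine ⟨fun h => ⟨fun h0 => absurd (h 0 h0) (by norm_num),
    fun h1 => absurd (h 1 h1) (by norm_num)⟩, ?_⟩
  rintro ⟨h0, h1⟩ (_ | _ | i) hi
  · exact absurd hi h0
  · exact absurd hi h1
  · omega

section FinsuppOfList

variable {α : Type*}

/-- The finitely supported function taking the value `l.get i` at `f i`. -/
noncomputable def finsuppOfList (l : List ℕ) (f : Fin l.length → α) : α →₀ ℕ :=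
  Finsupp.mapDomain f (Finsupp.equivFunOnFinite.symm l.get)

variable {l : List ℕ} {f : Fin l.length → α}

theorem finsuppOfList_apply (hf : f.Injective) (i : Fin l.length) :
    finsuppOfList l f (f i) = l.get i := by
  simp [finsuppOfList, Finsupp.mapDomain_apply hf]

theorem finsuppOfList_apply_of_notMem {v : α} (hv : v ∉ Set.range f) :
    finsuppOfList l f v = 0 :=
  Finsupp.mapDomain_of_notMem_range _ _ hv

theorem support_finsuppOfList [DecidableEq α] (hf : f.Injective) (hl : 0 ∉ l) :
    (finsuppOfList l f).support = Finset.univ.image f := by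
  rw [finsuppOfList, Finsupp.mapDomain_support_of_injective hf]
  congr
  ext i
  simpa using fun h : l[i.1] = 0 => hl (h ▸ l.get_mem i)

theorem degree_finsuppOfList : (finsuppOfList l f).degree = l.sum := by
  rw [finsuppOfList, Finsupp.degree_mapDomain, Finsupp.degree_eq_sum]
  simp

theorem prod_finsuppOfList {M : Type*} [CommMonoid M] (hf : f.Injective) (g : α → ℕ → M)
    (hg : ∀ v, g v 0 = 1) : (finsuppOfList l f).prod g = ∏ i, g (f i) (l.get i) := by
  rw [finsuppOfList, Finsupp.prod_mapDomain_index_inj hf, Finsupp.prod_fintype _ _ fun i => hg _]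
  simp

theorem forall_finsuppOfList_ne_one_iff (hf : f.Injective) :
    (∀ v, finsuppOfList l f v ≠ 1) ↔ 1 ∉ l := by
  constructor
  · intro h hl
    obtain ⟨i, hi⟩ := List.get_of_mem hl
    exact h (f i) (by rw [finsuppOfList_apply hf, hi])
  · intro hl v
    by_cases hv : v ∈ Set.range f
    · obtain ⟨i, rfl⟩ := hv
      rw [finsuppOfList_apply hf]
      exact fun h => hl (h ▸ l.get_mem i)
    · rw [finsuppOfList_apply_of_notMem hv]
      exact zero_ne_one

variable [LinearOrder α]

theorem sort_support_finsuppOfList (hf : StrictMono f) (hl : 0 ∉ l) :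
    (finsuppOfList l f).support.sort = List.ofFn f := by
  rw [support_finsuppOfList hf.injective hl, Fin.univ_image_def,
    List.toFinset_sort _ (List.nodup_ofFn.mpr hf.injective)]
  exact hf.sortedLT_ofFn.sortedLE.pairwise

theorem map_sort_support_finsuppOfList (hf : StrictMono f) (hl : 0 ∉ l) :
    (finsuppOfList l f).support.sort.map (finsuppOfList l f) = l := by
  rw [sort_support_finsuppOfList hf hl, List.map_ofFn]
  conv_rhs => rw [← List.ofFn_get l]
  exact List.ofFn_inj.mpr (funext (finsuppOfList_apply hf.injective))

theorem exists_finsuppOfList_eq (φ : α →₀ ℕ) :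
    ∃ (l : List ℕ) (f : Fin l.length → α), StrictMono f ∧ 0 ∉ l ∧ finsuppOfList l f = φ := by
  set s := φ.support.sort
  have hlen : (s.map φ).length = s.length := List.length_map _
  have hs : StrictMono s.get := (Finset.sortedLT_sort _).strictMono_get
  have hf : StrictMono fun i : Fin (s.map φ).length => s.get (i.cast hlen) :=
    fun i j hij => hs hij
  refine ⟨s.map φ, _, hf, by simp [s], Finsupp.ext fun v => ?_⟩
  by_cases hv : v ∈ Set.range s.get
  · obtain ⟨i, rfl⟩ := hv
    simpa using finsuppOfList_apply hf.injective (i.cast hlen.symm)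
  · rw [finsuppOfList_apply_of_notMem fun ⟨i, hi⟩ => hv ⟨_, hi⟩, eq_comm,
      ← Finsupp.notMem_support_iff, ← Finset.mem_sort (· ≤ ·)]
    exact fun h => hv (List.mem_iff_get.mp h)

theorem tsum_sigma_strictMono_eq_tsum_finsupp {R : Type*} [CommSemiring R] [TopologicalSpace R]
    (g : α → R) {k : ℕ} (hk : k ≠ 0) :
    ∑' x : Σ l : {l : List ℕ // l ≠ [] ∧ (∀ i ∈ l, 2 ≤ i) ∧ l.sum = k},
        {f : Fin l.1.length → α // StrictMono f}, ∏ i, g (x.2.1 i) ^ x.1.1.get i =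
      ∑' φ : {φ : α →₀ ℕ // (∀ v, φ v ≠ 1) ∧ φ.degree = k}, φ.1.prod (g · ^ ·) := by
  let e : (Σ l : {l : List ℕ // l ≠ [] ∧ (∀ i ∈ l, 2 ≤ i) ∧ l.sum = k},
      {f : Fin l.1.length → α // StrictMono f}) →
      {φ : α →₀ ℕ // (∀ v, φ v ≠ 1) ∧ φ.degree = k} := fun x =>
    ⟨finsuppOfList x.1.1 x.2.1,
      (forall_finsuppOfList_ne_one_iff x.2.2.injective).2 (List.forall_two_le_iff.1 x.1.2.2.1).2,
      degree_finsuppOfList.trans x.1.2.2.2⟩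
  have he : e.Bijective := by
    refine ⟨?_, ?_⟩
    · rintro ⟨⟨l₁, hl₁⟩, f₁, hf₁⟩ ⟨⟨l₂, hl₂⟩, f₂, hf₂⟩ h
      have hφ : finsuppOfList l₁ f₁ = finsuppOfList l₂ f₂ := congrArg Subtype.val h
      have h0₁ := (List.forall_two_le_iff.1 hl₁.2.1).1
      have h0₂ := (List.forall_two_le_iff.1 hl₂.2.1).1
      obtain rfl : l₁ = l₂ := by
        have hl := map_sort_support_finsuppOfList hf₁ h0₁
        rw [hφ, map_sort_support_finsuppOfList hf₂ h0₂] at hl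
        exact hl.symm
      obtain rfl : f₁ = f₂ := by
        have hf := sort_support_finsuppOfList hf₁ h0₁
        rw [hφ, sort_support_finsuppOfList hf₂ h0₂] at hf
        exact List.ofFn_injective hf.symm
      rfl
    · rintro ⟨φ, hφ₁, hφ₂⟩
      obtain ⟨l, f, hf, hl, rfl⟩ := exists_finsuppOfList_eq φ
      have hsum : l.sum = k := degree_finsuppOfList.symm.trans hφ₂
      refine ⟨⟨⟨l, ?_, List.forall_two_le_iff.2
        ⟨hl, (forall_finsuppOfList_ne_one_iff hf.injective).1 hφ₁⟩, hsum⟩, f, hf⟩, rfl⟩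
      rintro rfl
      exact hk hsum.symm
  rw [← (Equiv.ofBijective e he).tsum_eq]
  exact tsum_congr fun x => (prod_finsuppOfList x.2.2.injective _ fun _ => pow_zero _).symm

end FinsuppOfList

section TwoThreeDecomposition

variable {α : Type*}

noncomputable def twoThreeFinsupp (c : α →₀ ℕ) (s : Finset α) : α →₀ ℕ :=
  2 • c + ∑ v ∈ s, Finsupp.single v 3

theorem twoThreeFinsupp_apply [DecidableEq α] (c : α →₀ ℕ) (s : Finset α) (v : α) :
    twoThreeFinsupp c s v = 2 * c v + if v ∈ s then 3 else 0 := by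
  simp [twoThreeFinsupp, Finsupp.single_apply]

theorem twoThreeFinsupp_apply_ne_one (c : α →₀ ℕ) (s : Finset α) (v : α) :
    twoThreeFinsupp c s v ≠ 1 := by
  classical
  rw [twoThreeFinsupp_apply]
  split_ifs <;> omega

theorem twoThreeFinsupp_injective :
    Function.Injective fun p : (α →₀ ℕ) × Finset α => twoThreeFinsupp p.1 p.2 := by
  classical
  rintro ⟨c₁, s₁⟩ ⟨c₂, s₂⟩ h
  have happ (v : α) := DFunLike.congr_fun h v
  simp only [twoThreeFinsupp_apply] at happ
  obtain rfl : s₁ = s₂ := by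
    ext v
    have := happ v
    split_ifs at this <;> simp_all <;> omega
  obtain rfl : c₁ = c₂ := Finsupp.ext fun v => by have := happ v; omega
  rfl

theorem exists_twoThreeFinsupp_eq {φ : α →₀ ℕ} (hφ : ∀ v, φ v ≠ 1) :
    ∃ c s, twoThreeFinsupp c s = φ := by
  classical
  refine ⟨φ.mapRange (fun n => (n - 3 * (n % 2)) / 2) (by simp),
    φ.support.filter fun v => φ v % 2 = 1, Finsupp.ext fun v => ?_⟩
  have := hφ v
  rw [twoThreeFinsupp_apply, Finsupp.mapRange_apply]
  by_cases hv : φ v % 2 = 1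
  · rw [if_pos (by simp; omega)]; omega
  · rw [if_neg (by simp; omega)]; omega

theorem degree_twoThreeFinsupp (c : α →₀ ℕ) (s : Finset α) :
    (twoThreeFinsupp c s).degree = 2 * c.degree + 3 * s.card := by
  simp [twoThreeFinsupp, map_sum, mul_comm]

theorem prod_twoThreeFinsupp {M : Type*} [CommMonoid M] (g : α → M) (c : α →₀ ℕ)
    (s : Finset α) :
    (twoThreeFinsupp c s).prod (g · ^ ·) =
      c.prod (fun v m => (g v ^ 2) ^ m) * ∏ v ∈ s, g v ^ 3 := by
  classical
  rw [twoThreeFinsupp, Finsupp.prod_add_index' (fun _ => pow_zero _) (fun _ _ _ => pow_add _ _ _),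
    ← Finsupp.prod_finsetSum_index (fun _ => pow_zero _) (fun _ _ _ => pow_add _ _ _),
    two_smul, Finsupp.prod_add_index' (fun _ => pow_zero _) (fun _ _ _ => pow_add _ _ _)]
  simp [Finsupp.prod, ← Finset.prod_mul_distrib, ← pow_mul, ← pow_add, two_mul, mul_comm]

theorem tsum_ne_one_eq_tsum_twoThreeFinsupp {R : Type*} [CommSemiring R] [TopologicalSpace R]
    (g : α → R) (k : ℕ) :
    ∑' φ : {φ : α →₀ ℕ // (∀ v, φ v ≠ 1) ∧ φ.degree = k}, φ.1.prod (g · ^ ·) =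
      ∑' p : {p : (α →₀ ℕ) × Finset α // 2 * p.1.degree + 3 * p.2.card = k},
        p.1.1.prod (fun v m => (g v ^ 2) ^ m) * ∏ v ∈ p.1.2, g v ^ 3 := by
  let e : {p : (α →₀ ℕ) × Finset α // 2 * p.1.degree + 3 * p.2.card = k} →
      {φ : α →₀ ℕ // (∀ v, φ v ≠ 1) ∧ φ.degree = k} := fun p =>
    ⟨twoThreeFinsupp p.1.1 p.1.2, twoThreeFinsupp_apply_ne_one _ _,
      (degree_twoThreeFinsupp _ _).trans p.2⟩
  have he : e.Bijective := by
    refine ⟨fun p q h => Subtype.ext (twoThreeFinsupp_injective (congrArg Subtype.val h)), ?_⟩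
    rintro ⟨φ, hφ₁, hφ₂⟩
    obtain ⟨c, s, rfl⟩ := exists_twoThreeFinsupp_eq hφ₁
    exact ⟨⟨(c, s), (degree_twoThreeFinsupp c s).symm.trans hφ₂⟩, rfl⟩
  rw [← (Equiv.ofBijective e he).tsum_eq]
  exact tsum_congr fun p => prod_twoThreeFinsupp _ _ _

end TwoThreeDecomposition

section SortedTuples

variable {α : Type*}

theorem Multiset.degree_toFinsupp [DecidableEq α] (m : Multiset α) :
    (Multiset.toFinsupp m).degree = m.card := by
  simp [Finsupp.degree_apply]

theorem Multiset.prod_toFinsupp [DecidableEq α] {M : Type*} [CommMonoid M] (g : α → M)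
    (m : Multiset α) : (Multiset.toFinsupp m).prod (g · ^ ·) = (m.map g).prod := by
  simp [Finsupp.prod, Finset.prod_multiset_map_count]

variable [LinearOrder α] {R : Type*} [CommSemiring R] [TopologicalSpace R]

theorem tsum_monotone_prod_eq (g : α → R) (n : ℕ) :
    ∑' f : {f : Fin n → α // Monotone f}, ∏ i, g (f.1 i) =
      ∑' c : {c : α →₀ ℕ // c.degree = n}, c.1.prod (g · ^ ·) := by
  let e : {f : Fin n → α // Monotone f} → {c : α →₀ ℕ // c.degree = n} := fun f =>
    ⟨Multiset.toFinsupp ↑(List.ofFn f.1), by simp [Multiset.degree_toFinsupp]⟩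
  have he : e.Bijective := by
    refine ⟨fun f₁ f₂ h => Subtype.ext (List.ofFn_injective ?_), fun c => ?_⟩
    · have hperm :=
        Multiset.coe_eq_coe.mp (Multiset.toFinsupp.injective (congrArg Subtype.val h))
      exact hperm.eq_of_sortedLE f₁.2.sortedLE_ofFn f₂.2.sortedLE_ofFn
    · set L := (Finsupp.toMultiset c.1).sort
      have hL : n = L.length := by
        rw [Multiset.length_sort, ← Multiset.degree_toFinsupp, Finsupp.toMultiset_toFinsupp, c.2]
      have hofFn : List.ofFn (fun i => L.get (i.cast hL)) = L :=
        List.ext_get (by simp [hL]) (by simp)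
      refine ⟨⟨fun i => L.get (i.cast hL), fun i j hij => ?_⟩, Subtype.ext ?_⟩
      · exact (Multiset.pairwise_sort _ _).sortedLE.monotone_get hij
      · simp only [e, hofFn, L, Multiset.sort_eq, Finsupp.toMultiset_toFinsupp]
  rw [← (Equiv.ofBijective e he).tsum_eq]
  exact tsum_congr fun f => by simp [e, Multiset.prod_toFinsupp, List.prod_ofFn]

theorem tsum_strictMono_prod_eq (g : α → R) (n : ℕ) :
    ∑' f : {f : Fin n → α // StrictMono f}, ∏ i, g (f.1 i) =
      ∑' s : {s : Finset α // s.card = n}, ∏ v ∈ s.1, g v := by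
  let e : {f : Fin n → α // StrictMono f} → {s : Finset α // s.card = n} := fun f =>
    ⟨Finset.univ.image f.1, by simp [Finset.card_image_of_injective _ f.2.injective]⟩
  have he : e.Bijective := by
    refine ⟨fun f₁ f₂ h => ?_, fun s => ?_⟩
    · have h₁ := Finset.orderEmbOfFin_unique (e f₁).2 (by simp [e]) f₁.2
      have h₂ := Finset.orderEmbOfFin_unique (e f₁).2 (by rw [h]; simp [e]) f₂.2
      exact Subtype.ext (h₁.trans h₂.symm)
    · exact ⟨⟨s.1.orderEmbOfFin s.2, (s.1.orderEmbOfFin s.2).strictMono⟩,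
        Subtype.ext (Finset.image_orderEmbOfFin_univ _ _)⟩
  rw [← (Equiv.ofBijective e he).tsum_eq]
  exact tsum_congr fun f => (Finset.prod_image fun i _ j _ h => f.2.injective h).symm

end SortedTuples

theorem tsum_two_mul_add_three_mul_eq_sum_ite {M : Type*} [AddCommMonoid M] [TopologicalSpace M]
    (F : ℕ → ℕ → M) (k : ℕ) :
    ∑' ab : {ab : ℕ × ℕ // 2 * ab.1 + 3 * ab.2 = k}, F ab.1.1 ab.1.2 =
      ∑ a ∈ Finset.range (k + 1), ∑ b ∈ Finset.range (k + 1),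
        if 2 * a + 3 * b = k then F a b else 0 := by
  refine (tsum_subtype {ab : ℕ × ℕ | 2 * ab.1 + 3 * ab.2 = k} fun ab => F ab.1 ab.2).trans ?_
  rw [← Finset.sum_product', tsum_eq_sum fun ab hab => ?_]
  · exact Finset.sum_congr rfl fun ab _ => Set.indicator_apply _ _ _
  · rw [Finset.mem_product, Finset.mem_range, Finset.mem_range] at hab
    exact Set.indicator_of_notMem (by simp only [Set.mem_ofPred_eq]; omega) _

theorem ENNReal.tsum_two_mul_add_three_mul_eq_sum {X Y : Type*} (d : X → ℕ) (e : Y → ℕ)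
    (G : X → ℝ≥0∞) (H : Y → ℝ≥0∞) (k : ℕ) :
    ∑' p : {p : X × Y // 2 * d p.1 + 3 * e p.2 = k}, G p.1.1 * H p.1.2 =
      ∑ a ∈ Finset.range (k + 1), ∑ b ∈ Finset.range (k + 1),
        if 2 * a + 3 * b = k then (∑' x : {x // d x = a}, G x) * ∑' y : {y // e y = b}, H y
        else 0 := by
  let σ : (Σ ab : {ab : ℕ × ℕ // 2 * ab.1 + 3 * ab.2 = k},
      {x // d x = ab.1.1} × {y // e y = ab.1.2}) ≃ {p : X × Y // 2 * d p.1 + 3 * e p.2 = k} :=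
    { toFun q := ⟨(q.2.1, q.2.2), by rw [q.2.1.2, q.2.2.2, q.1.2]⟩
      invFun p := ⟨⟨(d p.1.1, e p.1.2), p.2⟩, ⟨p.1.1, rfl⟩, ⟨p.1.2, rfl⟩⟩
      left_inv := by
        rintro ⟨⟨⟨a, b⟩, h⟩, ⟨x, hx : d x = a⟩, ⟨y, hy : e y = b⟩⟩
        subst hx hy
        rfl
      right_inv _ := rfl }
  rw [← σ.tsum_eq, ENNReal.tsum_sigma', ← tsum_two_mul_add_three_mul_eq_sum_ite]
  refine tsum_congr fun ab => ?_
  exact (ENNReal.tsum_prod (f := fun (x : {x // d x = ab.1.1}) (y : {y // e y = ab.1.2}) =>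
    G x * H y)).trans (by simp_rw [ENNReal.tsum_mul_left, ENNReal.tsum_mul_right])

theorem ENNReal.tsum_prod_le_prod_tsum {ι β : Type*} [Fintype ι] (p : (ι → β) → Prop)
    (g : ι → β → ℝ≥0∞) : ∑' f : {f : ι → β // p f}, ∏ i, g i (f.1 i) ≤ ∏ i, ∑' b, g i b := by
  classical
  refine (ENNReal.tsum_comp_le_tsum_of_injective Subtype.val_injective
    (fun f : ι → β => ∏ i, g i (f i))).trans (ENNReal.summable.tsum_le_of_sum_le fun u => ?_)
  calc ∑ f ∈ u, ∏ i, g i (f i)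
      ≤ ∑ f ∈ Fintype.piFinset fun i => u.image (· i), ∏ i, g i (f i) :=
        Finset.sum_le_sum_of_subset fun f hf =>
          Fintype.mem_piFinset.2 fun i => Finset.mem_image_of_mem _ hf
    _ = ∏ i, ∑ b ∈ u.image (· i), g i b := (Finset.prod_univ_sum _ _).symm
    _ ≤ ∏ i, ∑' b, g i b := Finset.prod_le_prod' fun i _ => ENNReal.sum_le_tsum _

theorem ENNReal.tsum_pnat_inv_pow_ne_top {m : ℕ} (hm : 2 ≤ m) :
    ∑' v : ℕ+, ((v : ℕ) : ℝ≥0∞)⁻¹ ^ m ≠ ⊤ := by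
  have hs : Summable fun v : ℕ+ => ((v : ℕ) : ℝ)⁻¹ ^ m := by
    simp only [inv_pow]
    exact (Real.summable_nat_pow_inv.2 (by omega)).comp_injective PNat.coe_injective
  convert ENNReal.ofReal_ne_top (r := ∑' v : ℕ+, ((v : ℕ) : ℝ)⁻¹ ^ m)
  rw [ENNReal.ofReal_tsum_of_nonneg (fun v => by positivity) hs]
  congr 1 with v
  rw [ENNReal.ofReal_pow (by positivity), ENNReal.ofReal_inv_of_pos (by simp),
    ENNReal.ofReal_natCast]

noncomputable def mzetaENNReal (ks : List ℕ) : ℝ≥0∞ :=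
  ∑' f : {f : Fin ks.length → ℕ+ // StrictMono f}, ∏ i, ((f.1 i : ℕ) : ℝ≥0∞)⁻¹ ^ ks.get i

noncomputable def mzetaStarENNReal (ks : List ℕ) : ℝ≥0∞ :=
  ∑' f : {f : Fin ks.length → ℕ+ // Monotone f}, ∏ i, ((f.1 i : ℕ) : ℝ≥0∞)⁻¹ ^ ks.get i

theorem mzeta_eq_toReal (ks : List ℕ) : mzeta ks = (mzetaENNReal ks).toReal := by
  rw [mzetaENNReal, ENNReal.tsum_toReal_eq fun f => ENNReal.prod_ne_top fun i _ =>
    ENNReal.pow_ne_top (ENNReal.inv_ne_top.2 (by simp))]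
  simp [mzeta, ENNReal.toReal_prod, one_div]

theorem mzetaStar_eq_toReal (ks : List ℕ) : mzetaStar ks = (mzetaStarENNReal ks).toReal := by
  rw [mzetaStarENNReal, ENNReal.tsum_toReal_eq fun f => ENNReal.prod_ne_top fun i _ =>
    ENNReal.pow_ne_top (ENNReal.inv_ne_top.2 (by simp))]
  simp [mzetaStar, ENNReal.toReal_prod, one_div]

theorem mzetaENNReal_ne_top {ks : List ℕ} (h : ∀ k ∈ ks, 2 ≤ k) : mzetaENNReal ks ≠ ⊤ :=
  ne_top_of_le_ne_top
    (ENNReal.prod_ne_top fun i _ => ENNReal.tsum_pnat_inv_pow_ne_top (h _ (ks.get_mem i)))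
    (ENNReal.tsum_prod_le_prod_tsum _ fun (i : Fin ks.length) (v : ℕ+) =>
      ((v : ℕ) : ℝ≥0∞)⁻¹ ^ ks.get i)

theorem mzetaStarENNReal_ne_top {ks : List ℕ} (h : ∀ k ∈ ks, 2 ≤ k) : mzetaStarENNReal ks ≠ ⊤ :=
  ne_top_of_le_ne_top
    (ENNReal.prod_ne_top fun i _ => ENNReal.tsum_pnat_inv_pow_ne_top (h _ (ks.get_mem i)))
    (ENNReal.tsum_prod_le_prod_tsum _ fun (i : Fin ks.length) (v : ℕ+) =>
      ((v : ℕ) : ℝ≥0∞)⁻¹ ^ ks.get i)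

theorem mzetaStarENNReal_replicate_two (a : ℕ) :
    mzetaStarENNReal (List.replicate a 2) =
      ∑' c : {c : ℕ+ →₀ ℕ // c.degree = a}, c.1.prod fun v m => (((v : ℕ) : ℝ≥0∞)⁻¹ ^ 2) ^ m := by
  simp only [mzetaStarENNReal, List.get_eq_getElem, List.getElem_replicate]
  rw [tsum_monotone_prod_eq (fun v : ℕ+ => ((v : ℕ) : ℝ≥0∞)⁻¹ ^ 2), List.length_replicate]

theorem mzetaENNReal_replicate_three (b : ℕ) :
    mzetaENNReal (List.replicate b 3) =
      ∑' s : {s : Finset ℕ+ // s.card = b}, ∏ v ∈ s.1, ((v : ℕ) : ℝ≥0∞)⁻¹ ^ 3 := by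
  simp only [mzetaENNReal, List.get_eq_getElem, List.getElem_replicate]
  rw [tsum_strictMono_prod_eq (fun v : ℕ+ => ((v : ℕ) : ℝ≥0∞)⁻¹ ^ 3), List.length_replicate]

theorem tsum_mzetaENNReal_eq_sum {k : ℕ} (hk : k ≠ 0) :
    ∑' l : {l : List ℕ // l ≠ [] ∧ (∀ i ∈ l, 2 ≤ i) ∧ l.sum = k}, mzetaENNReal l.1 =
      ∑ a ∈ Finset.range (k + 1), ∑ b ∈ Finset.range (k + 1),
        if 2 * a + 3 * b = k then
          mzetaStarENNReal (List.replicate a 2) * mzetaENNReal (List.replicate b 3)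
        else 0 := by
  let g : ℕ+ → ℝ≥0∞ := fun v => ((v : ℕ) : ℝ≥0∞)⁻¹
  calc _ = ∑' x : Σ l : {l : List ℕ // l ≠ [] ∧ (∀ i ∈ l, 2 ≤ i) ∧ l.sum = k},
        {f : Fin l.1.length → ℕ+ // StrictMono f}, ∏ i, g (x.2.1 i) ^ x.1.1.get i :=
      (ENNReal.tsum_sigma' _).symm
    _ = _ := by
      rw [tsum_sigma_strictMono_eq_tsum_finsupp g hk, tsum_ne_one_eq_tsum_twoThreeFinsupp,
        ENNReal.tsum_two_mul_add_three_mul_eq_sum Finsupp.degree Finset.card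
          (fun c => c.prod fun v m => (g v ^ 2) ^ m) (fun s => ∏ v ∈ s, g v ^ 3)]
      simp only [mzetaStarENNReal_replicate_two, mzetaENNReal_replicate_three, g]

/-- T(k) = ∑_{2a+3b=k} ζ*(2,…,2) (a twos) · ζ(3,…,3) (b threes). -/
theorem maximal_height_sum_formula_coeff (k : ℕ) (hk : 2 ≤ k) :
    T k = ∑ a ∈ Finset.range (k + 1), ∑ b ∈ Finset.range (k + 1),
      if 2 * a + 3 * b = k then
        mzetaStar (List.replicate a 2) * mzeta (List.replicate b 3)
      else 0 := by
  have hfin (a b : ℕ) : (if 2 * a + 3 * b = k then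
      mzetaStarENNReal (List.replicate a 2) * mzetaENNReal (List.replicate b 3) else 0) ≠ ⊤ := by
    split_ifs
    · exact ENNReal.mul_ne_top
        (mzetaStarENNReal_ne_top fun i hi => (List.eq_of_mem_replicate hi).ge)
        (mzetaENNReal_ne_top fun i hi => by rw [List.eq_of_mem_replicate hi]; omega)
    · exact ENNReal.zero_ne_top
  have hT : T k = (∑' l : {l : List ℕ // l ≠ [] ∧ (∀ i ∈ l, 2 ≤ i) ∧ l.sum = k},
      mzetaENNReal l.1).toReal := by
    rw [T, ENNReal.tsum_toReal_eq fun l => mzetaENNReal_ne_top l.2.2.1]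
    simp only [mzeta_eq_toReal]
  rw [hT, tsum_mzetaENNReal_eq_sum (by omega),
    ENNReal.toReal_sum fun a _ => ENNReal.sum_ne_top.2 fun b _ => hfin a b]
  refine Finset.sum_congr rfl fun a _ => ?_
  rw [ENNReal.toReal_sum fun b _ => hfin a b]
  refine Finset.sum_congr rfl fun b _ => ?_
  split_ifs
  · rw [ENNReal.toReal_mul, mzetaStar_eq_toReal, mzeta_eq_toReal]
  · rfl
end

section
/- The case k = r = 2 of the explicit formula reduces to ζ(1,3) = ζ(4) − ζ(2,2); equivalently, ζ(1,3) + ζ(2,2) = ζ(4). -/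
open scoped BigOperators

namespace SFW4

open Filter Finset Topology

noncomputable def H (m : ℕ) : ℝ := ∑ j ∈ Finset.range m, 1 / ((j : ℝ) + 1)

lemma H_nonneg (m : ℕ) : 0 ≤ H m := by
  unfold H; positivity

lemma H_le (m : ℕ) : H m ≤ m := by
  induction m with
  | zero => simp [H]
  | succ n ih =>
    rw [H, Finset.sum_range_succ, ← H]
    have h1 : 1 / ((n : ℝ) + 1) ≤ 1 := by
      rw [div_le_one (by positivity)]; linarith [Nat.cast_nonneg (α := ℝ) n]
    push_cast
    linarith

noncomputable def f13 (p : ℕ × ℕ) : ℝ :=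
  1 / (((p.1 : ℝ) + 1) * ((p.1 : ℝ) + (p.2 : ℝ) + 2) ^ 3)

noncomputable def f22 (p : ℕ × ℕ) : ℝ :=
  1 / (((p.1 : ℝ) + 1) ^ 2 * ((p.1 : ℝ) + (p.2 : ℝ) + 2) ^ 2)

noncomputable def fT (p : ℕ × ℕ) : ℝ :=
  1 / (((p.1 : ℝ) + 1) * ((p.2 : ℝ) + 1) * ((p.1 : ℝ) + (p.2 : ℝ) + 2) ^ 2)

noncomputable def fG (p : ℕ × ℕ) : ℝ :=
  1 / (((p.1 : ℝ) + 1) ^ 2 * ((p.2 : ℝ) + 1) * ((p.1 : ℝ) + (p.2 : ℝ) + 2))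

lemma f13_nonneg (p : ℕ × ℕ) : 0 ≤ f13 p := by unfold f13; positivity
lemma f22_nonneg (p : ℕ × ℕ) : 0 ≤ f22 p := by unfold f22; positivity
lemma fT_nonneg (p : ℕ × ℕ) : 0 ≤ fT p := by unfold fT; positivity
lemma fG_nonneg (p : ℕ × ℕ) : 0 ≤ fG p := by unfold fG; positivity

lemma summable_sq : Summable (fun n : ℕ => 1 / ((n : ℝ) + 1) ^ 2) := by
  have h := (summable_nat_add_iff (f := fun n : ℕ => 1 / (n : ℝ) ^ 2) 1).2
    (Real.summable_one_div_nat_pow.2 one_lt_two)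
  refine h.congr fun n => ?_
  push_cast
  ring

lemma summable_base :
    Summable (fun p : ℕ × ℕ => 1 / ((p.1 : ℝ) + 1) ^ 2 * (1 / ((p.2 : ℝ) + 1) ^ 2)) := by
  have h0 : ∀ n : ℕ, 0 ≤ 1 / ((n : ℝ) + 1) ^ 2 := fun n => by positivity
  exact Summable.mul_of_nonneg (f := fun n : ℕ => 1 / ((n : ℝ) + 1) ^ 2)
    (g := fun n : ℕ => 1 / ((n : ℝ) + 1) ^ 2) summable_sq summable_sq h0 h0

lemma summable_of_le_base {f : ℕ × ℕ → ℝ} (h0 : ∀ p, 0 ≤ f p)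
    (h : ∀ p, f p ≤ 1 / ((p.1 : ℝ) + 1) ^ 2 * (1 / ((p.2 : ℝ) + 1) ^ 2)) : Summable f :=
  Summable.of_nonneg_of_le h0 h summable_base

lemma summable_f13 : Summable f13 := by
  refine summable_of_le_base f13_nonneg fun p => ?_
  have ha : (0:ℝ) ≤ (p.1 : ℝ) := Nat.cast_nonneg _
  have hb : (0:ℝ) ≤ (p.2 : ℝ) := Nat.cast_nonneg _
  rw [f13, div_mul_div_comm, one_mul]
  refine one_div_le_one_div_of_le (by positivity) ?_
  nlinarith [sq_nonneg ((p.1:ℝ) + 1), sq_nonneg ((p.2:ℝ)+1), mul_nonneg ha hb]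

lemma summable_f22 : Summable f22 := by
  refine summable_of_le_base f22_nonneg fun p => ?_
  have ha : (0:ℝ) ≤ (p.1 : ℝ) := Nat.cast_nonneg _
  have hb : (0:ℝ) ≤ (p.2 : ℝ) := Nat.cast_nonneg _
  rw [f22, div_mul_div_comm, one_mul]
  refine one_div_le_one_div_of_le (by positivity) ?_
  nlinarith [mul_nonneg ha hb, sq_nonneg ((p.1:ℝ)+1)]

lemma summable_fT : Summable fT := by
  refine summable_of_le_base fT_nonneg fun p => ?_
  have ha : (0:ℝ) ≤ (p.1 : ℝ) := Nat.cast_nonneg _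
  have hb : (0:ℝ) ≤ (p.2 : ℝ) := Nat.cast_nonneg _
  rw [fT, div_mul_div_comm, one_mul]
  refine one_div_le_one_div_of_le (by positivity) ?_
  nlinarith [mul_nonneg ha hb, mul_nonneg (mul_nonneg ha hb) ha, mul_nonneg (mul_nonneg ha hb) hb]

lemma summable_fG : Summable fG := by
  refine summable_of_le_base fG_nonneg fun p => ?_
  have ha : (0:ℝ) ≤ (p.1 : ℝ) := Nat.cast_nonneg _
  have hb : (0:ℝ) ≤ (p.2 : ℝ) := Nat.cast_nonneg _
  rw [fG, div_mul_div_comm, one_mul]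
  refine one_div_le_one_div_of_le (by positivity) ?_
  nlinarith [mul_nonneg ha hb, mul_nonneg (mul_nonneg ha hb) hb, sq_nonneg ((p.1:ℝ)+1)]

/-- 1/(mk n²) = 1/(m n³) + 1/(k n³) where n = m + k. -/
lemma fT_eq (p : ℕ × ℕ) : fT p = f13 p + f13 p.swap := by
  obtain ⟨a, b⟩ := p
  have ha : (0:ℝ) < (a : ℝ) + 1 := by positivity
  have hb : (0:ℝ) < (b : ℝ) + 1 := by positivity
  have hn : (0:ℝ) < (a : ℝ) + (b : ℝ) + 2 := by positivity
  simp only [fT, f13, Prod.swap_prod_mk]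
  have hn' : (0:ℝ) < (b : ℝ) + (a : ℝ) + 2 := by positivity
  field_simp
  ring

/-- 1/(m²k n) = 1/(mk n²) + 1/(m² n²) where n = m + k. -/
lemma fG_eq (p : ℕ × ℕ) : fG p = fT p + f22 p := by
  obtain ⟨a, b⟩ := p
  have ha : (0:ℝ) < (a : ℝ) + 1 := by positivity
  have hb : (0:ℝ) < (b : ℝ) + 1 := by positivity
  have hn : (0:ℝ) < (a : ℝ) + (b : ℝ) + 2 := by positivity
  simp only [fG, fT, f22]
  field_simp
  ring

/-- Telescoping: ∑_{k≥1} (1/k − 1/(k+m)) = H m. -/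
lemma hasSum_tele (m : ℕ) :
    HasSum (fun k : ℕ => 1 / ((k : ℝ) + 1) - 1 / ((k : ℝ) + 1 + m)) (H m) := by
  have hnn : ∀ k : ℕ, 0 ≤ 1 / ((k : ℝ) + 1) - 1 / ((k : ℝ) + 1 + m) := by
    intro k
    have : (1:ℝ) / ((k : ℝ) + 1 + m) ≤ 1 / ((k : ℝ) + 1) :=
      one_div_le_one_div_of_le (by positivity) (by linarith [Nat.cast_nonneg (α := ℝ) m])
    linarith
  rw [hasSum_iff_tendsto_nat_of_nonneg hnn]
  have h1 : ∀ c K : ℕ, ∑ k ∈ Finset.range K, (1:ℝ) / ((c : ℝ) + (k : ℝ) + 1)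
      = ∑ k ∈ Finset.Ico c (K + c), 1 / ((k : ℝ) + 1) := by
    intro c K
    rw [Finset.sum_Ico_eq_sum_range]
    simp only [add_tsub_cancel_right]
    refine Finset.sum_congr rfl fun j _ => ?_
    push_cast
    ring
  have key : ∀ N : ℕ, ∑ k ∈ Finset.range N, (1 / ((k : ℝ) + 1) - 1 / ((k : ℝ) + 1 + m))
      = ∑ j ∈ Finset.range m, (1 / ((j : ℝ) + 1) - 1 / ((N : ℝ) + (j : ℝ) + 1)) := by
    intro N
    rw [Finset.sum_sub_distrib, Finset.sum_sub_distrib]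
    have e1 : ∑ k ∈ Finset.range N, (1:ℝ) / ((k : ℝ) + 1 + m)
        = ∑ k ∈ Finset.Ico m (N + m), 1 / ((k : ℝ) + 1) := by
      rw [← h1 m N]
      exact Finset.sum_congr rfl fun k _ => by ring_nf
    have e2 : ∑ j ∈ Finset.range m, (1:ℝ) / ((N : ℝ) + (j : ℝ) + 1)
        = ∑ k ∈ Finset.Ico N (N + m), 1 / ((k : ℝ) + 1) := by
      rw [show N + m = m + N from add_comm N m, ← h1 N m]
    rw [e1, e2]
    have c1 : ∑ k ∈ Finset.range N, (1:ℝ) / ((k : ℝ) + 1)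
        + ∑ k ∈ Finset.Ico N (N + m), 1 / ((k : ℝ) + 1)
        = ∑ k ∈ Finset.range (N + m), 1 / ((k : ℝ) + 1) := by
      rw [Finset.range_eq_Ico, Finset.range_eq_Ico]
      exact Finset.sum_Ico_consecutive _ (Nat.zero_le _) (Nat.le_add_right _ _)
    have c2 : ∑ k ∈ Finset.range m, (1:ℝ) / ((k : ℝ) + 1)
        + ∑ k ∈ Finset.Ico m (N + m), 1 / ((k : ℝ) + 1)
        = ∑ k ∈ Finset.range (N + m), 1 / ((k : ℝ) + 1) := by
      rw [Finset.range_eq_Ico, Finset.range_eq_Ico]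
      exact Finset.sum_Ico_consecutive _ (Nat.zero_le _) (Nat.le_add_left _ _)
    linarith
  have lim : Tendsto (fun N : ℕ => ∑ j ∈ Finset.range m,
      (1 / ((j : ℝ) + 1) - 1 / ((N : ℝ) + (j : ℝ) + 1))) atTop (𝓝 (H m)) := by
    have hH : H m = ∑ j ∈ Finset.range m, (1 / ((j : ℝ) + 1) - 0) := by simp [H]
    rw [hH]
    refine tendsto_finset_sum _ fun j _ => ?_
    refine Tendsto.sub tendsto_const_nhds ?_
    have h1 : Tendsto (fun N : ℕ => (N : ℝ) + (j : ℝ) + 1) atTop atTop :=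
      tendsto_atTop_add_const_right _ _
        (tendsto_atTop_add_const_right _ _ tendsto_natCast_atTop_atTop)
    simpa [one_div, Function.comp_def] using tendsto_inv_atTop_zero.comp h1
  exact (tendsto_congr fun N => (key N)).2 lim

/-- Inner sum for fG: for fixed a, ∑_b fG (a,b) = (1/(a+1)³) · H(a+1). -/
lemma hasSum_fG_inner (a : ℕ) :
    HasSum (fun b : ℕ => fG (a, b)) (1 / ((a : ℝ) + 1) ^ 3 * H (a + 1)) := by
  have h := (hasSum_tele (a + 1)).mul_left (1 / ((a : ℝ) + 1) ^ 3)
  refine HasSum.congr_fun h fun b => ?_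
  have ha : (0:ℝ) < (a : ℝ) + 1 := by positivity
  have hb : (0:ℝ) < (b : ℝ) + 1 := by positivity
  simp only [fG]
  push_cast
  have hn' : (0:ℝ) < (b : ℝ) + 1 + ((a:ℝ) + 1) := by linarith
  field_simp
  ring

/-- The sigma-reparametrization equiv: ⟨n, j⟩ ↦ (j, n-1-j), grouping pairs by total. -/
def eS : (Σ n : ℕ, Fin n) ≃ ℕ × ℕ where
  toFun x := ((x.2 : ℕ), x.1 - 1 - (x.2 : ℕ))
  invFun p := ⟨p.1 + p.2 + 1, ⟨p.1, by omega⟩⟩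
  left_inv := by
    rintro ⟨n, ⟨jv, hj⟩⟩
    have hn : jv + (n - 1 - jv) + 1 = n := by omega
    exact Sigma.ext hn ((Fin.heq_ext_iff hn).2 rfl)
  right_inv := by
    rintro ⟨a, b⟩
    show ((a : ℕ), a + b + 1 - 1 - a) = (a, b)
    exact Prod.ext rfl (by omega)

/-- Equiv between strictly monotone pairs and ℕ × ℕ. -/
def e2 : {f : Fin 2 → ℕ+ // StrictMono f} ≃ ℕ × ℕ where
  toFun f := ((f.1 0 : ℕ) - 1, (f.1 1 : ℕ) - (f.1 0 : ℕ) - 1)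
  invFun p := ⟨![⟨p.1 + 1, Nat.succ_pos _⟩, ⟨p.1 + p.2 + 2, by omega⟩], by
    intro i j hij
    fin_cases i <;> fin_cases j <;> simp_all <;>
      exact (PNat.mk_lt_mk _ _ _ _).2 (by omega)⟩
  left_inv := by
    rintro ⟨f, hf⟩
    have h01 : f 0 < f 1 := hf (by decide : (0 : Fin 2) < 1)
    have h01' : (f 0 : ℕ) < (f 1 : ℕ) := h01
    have h0 : 0 < (f 0 : ℕ) := (f 0).2
    refine Subtype.ext (funext fun i => ?_)
    fin_cases i <;>
      · apply PNat.coe_injective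
        simp
        omega
  right_inv := by
    rintro ⟨a, b⟩
    show ((a + 1 : ℕ) - 1, (a + b + 2 : ℕ) - (a + 1) - 1) = (a, b)
    exact Prod.ext rfl (by omega)

/-- Equiv between singletons and ℕ. -/
def e1 : {f : Fin 1 → ℕ+ // StrictMono f} ≃ ℕ where
  toFun f := (f.1 0 : ℕ) - 1
  invFun n := ⟨fun _ => ⟨n + 1, Nat.succ_pos _⟩, fun i j hij =>
    absurd (Subsingleton.elim i j) hij.ne⟩
  left_inv := by
    rintro ⟨f, hf⟩
    have h0 : 0 < (f 0 : ℕ) := (f 0).2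
    refine Subtype.ext (funext fun i => ?_)
    fin_cases i
    apply PNat.coe_injective
    simp
    omega
  right_inv := fun n => by simp

lemma mzeta13 : mzeta [1, 3] = ∑' p : ℕ × ℕ, f13 p := by
  have h : mzeta [1, 3] = ∑' p : ℕ × ℕ,
      ∏ i : Fin 2, (1 : ℝ) / (((e2.symm p).1 i : ℕ) : ℝ) ^ ([1, 3].get i) :=
    (Equiv.tsum_eq e2.symm
      (fun f : {f : Fin 2 → ℕ+ // StrictMono f} =>
        ∏ i : Fin 2, (1 : ℝ) / ((f.1 i : ℕ) : ℝ) ^ ([1, 3].get i))).symm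
  rw [h]
  refine tsum_congr fun p => ?_
  simp only [e2, Equiv.coe_fn_symm_mk, Fin.prod_univ_two, f13, Matrix.cons_val_zero,
    Matrix.cons_val_one, Matrix.head_cons, List.get, PNat.mk_coe]
  have hx : ((p.1:ℝ) + 1) ≠ 0 := by positivity
  have hy : ((p.1:ℝ) + (p.2:ℝ) + 2) ≠ 0 := by positivity
  push_cast
  field_simp
  simp only [PNat.mk_coe]
  push_cast
  field_simp

lemma mzeta22 : mzeta [2, 2] = ∑' p : ℕ × ℕ, f22 p := by
  have h : mzeta [2, 2] = ∑' p : ℕ × ℕ,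
      ∏ i : Fin 2, (1 : ℝ) / (((e2.symm p).1 i : ℕ) : ℝ) ^ ([2, 2].get i) :=
    (Equiv.tsum_eq e2.symm
      (fun f : {f : Fin 2 → ℕ+ // StrictMono f} =>
        ∏ i : Fin 2, (1 : ℝ) / ((f.1 i : ℕ) : ℝ) ^ ([2, 2].get i))).symm
  rw [h]
  refine tsum_congr fun p => ?_
  simp only [e2, Equiv.coe_fn_symm_mk, Fin.prod_univ_two, f22, Matrix.cons_val_zero,
    Matrix.cons_val_one, Matrix.head_cons, List.get, PNat.mk_coe]
  have hx : ((p.1:ℝ) + 1) ≠ 0 := by positivity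
  have hy : ((p.1:ℝ) + (p.2:ℝ) + 2) ≠ 0 := by positivity
  push_cast
  field_simp
  simp only [PNat.mk_coe]
  push_cast
  field_simp

lemma mzeta4 : mzeta [4] = ∑' n : ℕ, 1 / ((n : ℝ) + 1) ^ 4 := by
  have h : mzeta [4] = ∑' n : ℕ,
      ∏ i : Fin 1, (1 : ℝ) / (((e1.symm n).1 i : ℕ) : ℝ) ^ ([4].get i) :=
    (Equiv.tsum_eq e1.symm
      (fun f : {f : Fin 1 → ℕ+ // StrictMono f} =>
        ∏ i : Fin 1, (1 : ℝ) / ((f.1 i : ℕ) : ℝ) ^ ([4].get i))).symm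
  rw [h]
  refine tsum_congr fun n => ?_
  simp only [e1, Equiv.coe_fn_symm_mk, Fin.prod_univ_one, List.get, PNat.mk_coe]
  have hx : ((n:ℝ) + 1) ≠ 0 := by positivity
  push_cast
  field_simp

lemma summable_z4 : Summable (fun n : ℕ => 1 / ((n : ℝ) + 1) ^ 4) := by
  refine Summable.of_nonneg_of_le (fun n => by positivity) (fun n => ?_) summable_sq
  refine one_div_le_one_div_of_le (by positivity) ?_
  have h1 : (1:ℝ) ≤ ((n:ℝ) + 1) := by linarith [Nat.cast_nonneg (α := ℝ) n]
  have hx2 : (1:ℝ) ≤ ((n:ℝ) + 1) ^ 2 := by nlinarith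
  nlinarith [sq_nonneg (((n:ℝ) + 1) ^ 2 - 1), hx2]

lemma summable_g1 : Summable (fun a : ℕ => 1 / ((a : ℝ) + 1) ^ 3 * H a) := by
  refine Summable.of_nonneg_of_le
    (fun a => mul_nonneg (by positivity) (H_nonneg a)) (fun a => ?_) summable_sq
  have ha : (0:ℝ) < (a : ℝ) + 1 := by positivity
  have h1 : H a ≤ (a : ℝ) + 1 := le_trans (H_le a) (by linarith)
  calc 1 / ((a:ℝ)+1)^3 * H a ≤ 1 / ((a:ℝ)+1)^3 * ((a:ℝ)+1) :=
        mul_le_mul_of_nonneg_left h1 (by positivity)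
    _ = 1 / ((a:ℝ)+1)^2 := by field_simp

/-- S13 regrouped by the larger index: ∑ f13 = ∑_n (1/(n+1)³) H n. -/
lemma S13_eq : ∑' p : ℕ × ℕ, f13 p = ∑' n : ℕ, 1 / ((n : ℝ) + 1) ^ 3 * H n := by
  rw [← Equiv.tsum_eq eS f13]
  rw [Summable.tsum_sigma' (f := fun c : (Σ n : ℕ, Fin n) => f13 (eS c))
    (fun n => (hasSum_fintype _).summable) (eS.summable_iff.2 summable_f13)]
  refine tsum_congr fun n => ?_
  rw [tsum_fintype]
  have hval : ∀ j : Fin n, f13 (eS ⟨n, j⟩) = 1 / ((n : ℝ) + 1) ^ 3 * (1 / (((j : ℕ) : ℝ) + 1)) := by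
    intro j
    have hj : (j : ℕ) < n := j.2
    simp only [eS, Equiv.coe_fn_mk, f13]
    have hcast : ((n - 1 - (j : ℕ) : ℕ) : ℝ) = (n : ℝ) - 1 - ((j : ℕ) : ℝ) := by
      have h' : (n - 1 - (j : ℕ)) + ((j : ℕ) + 1) = n := by omega
      have h'' := congrArg (fun k : ℕ => (k : ℝ)) h'
      push_cast at h''
      linarith
    rw [hcast]
    have h1 : (((j:ℕ):ℝ) + 1) * (((j:ℕ):ℝ) + ((n:ℝ) - 1 - ((j:ℕ):ℝ)) + 2) ^ 3
        = (((j:ℕ):ℝ) + 1) * ((n:ℝ) + 1) ^ 3 := by ring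
    rw [h1]
    have hn1 : (0:ℝ) < (n:ℝ) + 1 := by positivity
    have hj1 : (0:ℝ) < ((j:ℕ):ℝ) + 1 := by positivity
    field_simp
  rw [Finset.sum_congr rfl fun j _ => hval j, ← Finset.mul_sum]
  congr 1
  rw [H]
  exact Fin.sum_univ_eq_sum_range (fun j => 1 / ((j : ℝ) + 1)) n

theorem main : (∑' p : ℕ × ℕ, f13 p) + (∑' p : ℕ × ℕ, f22 p)
    = ∑' n : ℕ, 1 / ((n : ℝ) + 1) ^ 4 := by
  have hswapS : Summable (fun p : ℕ × ℕ => f13 p.swap) := by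
    have h := (Equiv.prodComm ℕ ℕ).summable_iff.2 summable_f13
    simpa [Function.comp_def, Equiv.coe_prodComm] using h
  have hswap : (∑' p : ℕ × ℕ, f13 p.swap) = ∑' p : ℕ × ℕ, f13 p := by
    have h := Equiv.tsum_eq (Equiv.prodComm ℕ ℕ) f13
    simpa [Equiv.coe_prodComm] using h
  have hT : (∑' p : ℕ × ℕ, fT p) = (∑' p : ℕ × ℕ, f13 p) + ∑' p : ℕ × ℕ, f13 p := by
    calc (∑' p : ℕ × ℕ, fT p) = ∑' p : ℕ × ℕ, (f13 p + f13 p.swap) := tsum_congr fT_eq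
      _ = (∑' p : ℕ × ℕ, f13 p) + ∑' p : ℕ × ℕ, f13 p.swap := Summable.tsum_add summable_f13 hswapS
      _ = (∑' p : ℕ × ℕ, f13 p) + ∑' p : ℕ × ℕ, f13 p := by rw [hswap]
  have hG : (∑' p : ℕ × ℕ, fG p) = (∑' p : ℕ × ℕ, fT p) + ∑' p : ℕ × ℕ, f22 p := by
    calc (∑' p : ℕ × ℕ, fG p) = ∑' p : ℕ × ℕ, (fT p + f22 p) := tsum_congr fG_eq
      _ = _ := Summable.tsum_add summable_fT summable_f22
  have hG2 : (∑' p : ℕ × ℕ, fG p) = ∑' a : ℕ, 1 / ((a : ℝ) + 1) ^ 3 * H (a + 1) := by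
    rw [Summable.tsum_prod' summable_fG (fun a => (hasSum_fG_inner a).summable)]
    exact tsum_congr fun a => (hasSum_fG_inner a).tsum_eq
  have hsplit : ∀ a : ℕ, 1 / ((a : ℝ) + 1) ^ 3 * H (a + 1)
      = 1 / ((a : ℝ) + 1) ^ 3 * H a + 1 / ((a : ℝ) + 1) ^ 4 := by
    intro a
    rw [H, Finset.sum_range_succ, ← H]
    have ha : (0:ℝ) < (a : ℝ) + 1 := by positivity
    field_simp
  have hG3 : (∑' a : ℕ, 1 / ((a : ℝ) + 1) ^ 3 * H (a + 1))
      = (∑' a : ℕ, 1 / ((a : ℝ) + 1) ^ 3 * H a) + ∑' n : ℕ, 1 / ((n : ℝ) + 1) ^ 4 := by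
    rw [tsum_congr hsplit]
    exact Summable.tsum_add summable_g1 summable_z4
  have hS13 := S13_eq
  linarith [hG, hG2, hG3, hT, hS13]

end SFW4

/-- The depth-2 sum formula at weight 4: ζ(1,3) + ζ(2,2) = ζ(4). -/
theorem sum_formula_weight_four : mzeta [1, 3] + mzeta [2, 2] = mzeta [4] := by
  rw [SFW4.mzeta13, SFW4.mzeta22, SFW4.mzeta4]
  exact SFW4.main
end

section
/- The function ξ(k; s) = (1/Γ(s)) ∫_0^∞ t^{s-1} Li_k(1 − e^{−t})/(e^t − 1) dt, defined for Re(s) > 1 with Li_k the classical polylogarithm (k ≥ 1 an integer), satisfies ξ(k; 1) = ζ(k+1). -/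
/-!
Expanding `Li_k(1 - e^{-t}) / (e^t - 1) = ∑_{m ≥ 1} (1 - e^{-t})^{m-1} e^{-t} / m^k`,
the `m`-th term integrates to `1/m^{k+1}`, since `(1 - e^{-t})^{m-1} e^{-t}` is the derivative
of `(1 - e^{-t})^m / m`. All terms are nonnegative, so the sum and the integral may be exchanged.
-/

open scoped BigOperators

/-- The polylogarithm Li_k(z) = ∑_{m≥1} z^m/m^k. -/
noncomputable def Li (k : ℕ) (z : ℝ) : ℝ := ∑' m : ℕ+, z ^ (m : ℕ) / ((m : ℕ) : ℝ) ^ k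

open MeasureTheory Set Filter Topology Real

lemma integral_tsum_of_nonneg {ι α : Type*} [Countable ι] [MeasurableSpace α] {μ : Measure α}
    {f : ι → α → ℝ} (hf : ∀ i, Integrable (f i) μ) (hf_nonneg : ∀ i, 0 ≤ᵐ[μ] f i)
    (hsum : Summable fun i => ∫ a, f i a ∂μ) :
    ∑' i, ∫ a, f i a ∂μ = ∫ a, ∑' i, f i a ∂μ := by
  refine integral_tsum_of_summable_integral_norm hf ?_
  refine hsum.congr fun i => integral_congr_ae ?_
  filter_upwards [hf_nonneg i] with a ha
  exact (norm_of_nonneg ha).symm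

lemma Li_eq_mul_tsum (k : ℕ) (z : ℝ) :
    Li k z = z * ∑' m : ℕ+, z ^ ((m : ℕ) - 1) / ((m : ℕ) : ℝ) ^ k := by
  rw [Li, ← tsum_mul_left]
  refine tsum_congr fun m => ?_
  rw [← mul_div_assoc, ← pow_succ', Nat.sub_add_cancel m.pos]

lemma one_sub_exp_neg_nonneg {t : ℝ} (ht : 0 ≤ t) : 0 ≤ 1 - exp (-t) := by
  simpa using exp_le_one_iff.mpr (neg_nonpos.mpr ht)

lemma Li_one_sub_exp_neg_div_exp_sub_one (k : ℕ) {t : ℝ} (ht : t ≠ 0) :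
    Li k (1 - exp (-t)) / (exp t - 1) =
      ∑' m : ℕ+, (1 - exp (-t)) ^ ((m : ℕ) - 1) * exp (-t) / ((m : ℕ) : ℝ) ^ k := by
  have hz : 1 - exp (-t) ≠ 0 := by
    rw [sub_ne_zero, ne_comm, Ne, exp_eq_one_iff, neg_eq_zero]
    exact ht
  have hexp : exp t - 1 = (1 - exp (-t)) * exp t := by
    rw [sub_mul, one_mul, exp_neg, inv_mul_cancel₀ (exp_pos t).ne']
  rw [Li_eq_mul_tsum, hexp, mul_div_mul_left _ _ hz, div_eq_mul_inv, ← exp_neg,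
    ← tsum_mul_right]
  exact tsum_congr fun m => div_mul_eq_mul_div _ _ _

lemma hasDerivAt_one_sub_exp_neg_pow_div (n : ℕ) (t : ℝ) :
    HasDerivAt (fun t => (1 - exp (-t)) ^ (n + 1) / (n + 1 : ℝ))
      ((1 - exp (-t)) ^ n * exp (-t)) t := by
  have h := (((hasDerivAt_neg t).exp.const_sub 1).pow (n + 1)).div_const (n + 1 : ℝ)
  refine h.congr_deriv ?_
  rw [Nat.add_sub_cancel]
  push_cast
  field_simp

lemma tendsto_one_sub_exp_neg_pow_div (n : ℕ) :
    Tendsto (fun t => (1 - exp (-t)) ^ (n + 1) / (n + 1 : ℝ)) atTop (𝓝 (1 / (n + 1))) := by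
  simpa using ((tendsto_exp_neg_atTop_nhds_zero.const_sub 1).pow (n + 1)).div_const (n + 1 : ℝ)

lemma one_sub_exp_neg_pow_mul_exp_neg_nonneg (n : ℕ) {t : ℝ} (ht : 0 ≤ t) :
    0 ≤ (1 - exp (-t)) ^ n * exp (-t) :=
  mul_nonneg (pow_nonneg (one_sub_exp_neg_nonneg ht) n) (exp_pos _).le

lemma integrableOn_Ioi_one_sub_exp_neg_pow_mul_exp_neg (n : ℕ) :
    IntegrableOn (fun t => (1 - exp (-t)) ^ n * exp (-t)) (Ioi 0) :=
  integrableOn_Ioi_deriv_of_nonneg' (fun t _ => hasDerivAt_one_sub_exp_neg_pow_div n t)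
    (fun _ ht => one_sub_exp_neg_pow_mul_exp_neg_nonneg n (le_of_lt ht))
    (tendsto_one_sub_exp_neg_pow_div n)

lemma integral_Ioi_one_sub_exp_neg_pow_mul_exp_neg (n : ℕ) :
    ∫ t in Ioi (0 : ℝ), (1 - exp (-t)) ^ n * exp (-t) = 1 / (n + 1) := by
  rw [integral_Ioi_of_hasDerivAt_of_nonneg' (fun t _ => hasDerivAt_one_sub_exp_neg_pow_div n t)
    (fun _ ht => one_sub_exp_neg_pow_mul_exp_neg_nonneg n (le_of_lt ht))
    (tendsto_one_sub_exp_neg_pow_div n)]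
  simp

/-- ξ(k; 1) = ζ(k+1), where ξ(k; s) = (1/Γ(s)) ∫₀^∞ t^{s−1} Li_k(1−e^{−t})/(eᵗ−1) dt. -/
theorem xi_at_one (k : ℕ) (hk : 1 ≤ k) :
    (Real.Gamma 1)⁻¹ *
        ∫ t in Set.Ioi (0 : ℝ),
          t ^ ((1 : ℝ) - 1) * (Li k (1 - Real.exp (-t)) / (Real.exp t - 1)) =
      ∑' m : ℕ+, 1 / ((m : ℕ) : ℝ) ^ (k + 1) := by
  set g : ℕ+ → ℝ → ℝ := fun m t =>
    (1 - exp (-t)) ^ ((m : ℕ) - 1) * exp (-t) / ((m : ℕ) : ℝ) ^ k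
  have hg_integral (m : ℕ+) : ∫ t in Ioi 0, g m t = 1 / ((m : ℕ) : ℝ) ^ (k + 1) := by
    rw [integral_div, integral_Ioi_one_sub_exp_neg_pow_mul_exp_neg, Nat.cast_pred m.pos,
      sub_add_cancel, div_div, pow_succ']
  have hg_nonneg (m : ℕ+) : 0 ≤ᵐ[volume.restrict (Ioi 0)] g m := by
    filter_upwards [ae_restrict_mem measurableSet_Ioi] with t ht
    exact div_nonneg (one_sub_exp_neg_pow_mul_exp_neg_nonneg _ (le_of_lt ht)) (by positivity)
  have hg_summable : Summable fun m : ℕ+ => ∫ t in Ioi 0, g m t := by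
    simp_rw [hg_integral]
    exact (summable_one_div_nat_pow.mpr (by omega)).comp_injective PNat.coe_injective
  rw [Gamma_one, inv_one, one_mul, ← tsum_congr hg_integral,
    integral_tsum_of_nonneg
      (fun m => (integrableOn_Ioi_one_sub_exp_neg_pow_mul_exp_neg _).div_const _)
      hg_nonneg hg_summable]
  refine setIntegral_congr_fun measurableSet_Ioi fun t ht => ?_
  rw [sub_self, rpow_zero, one_mul, Li_one_sub_exp_neg_div_exp_sub_one k (ne_of_gt ht)]
end
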